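/- arXiv:2206.14757 — 8 statements merged into one kernel-verified Lean document; each statement's English description precedes it below -/
import Mathlib

section
/- Let N ≥ 1. The ℝ-linear map Φ from the algebra of N-periodic difference operators to the algebra of N×N matrices over the Laurent polynomial ring ℝ[z, z^{−1}], defined by Φ(Σ_i a^i 𝒯^i) = Σ_i diag(a^i_1, …, a^i_N) · M^i, where M := Σ_{k=1}^{N−1} E_{k,k+1} + z E_{N,1} (an invertible matrix over ℝ[z, z^{−1}], with inverse M^{−1} = Σ_{k=1}^{N−1} E_{k+1,k} + z^{−1} E_{1,N}), is an isomorphism of ℝ-algebras. -/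
noncomputable section

/-- A (pseudo-)difference operator, given by its coefficient sequences:
`a i j` is the `j`-th entry of the coefficient sequence of `𝒯^i`. -/
abbrev DOp : Type := ℤ → ℤ → ℝ

namespace DOp

/-- Product of difference operators, determined by `𝒯 ∘ a = (𝒯a) ∘ 𝒯`:
the coefficient of `𝒯^n` in `a * b` is `Σ_{i+j=n} a^i · 𝒯^i(b^j)`. -/
def mul (a b : DOp) : DOp := fun n j => ∑ᶠ i : ℤ, a i j * b (n - i) (j + i)

/-- The identity difference operator. -/
def one : DOp := fun n j => if n = 0 then 1 else 0

/-- The r-matrix `r(Σ_i a^i 𝒯^i) = ½(Σ_{i>0} a^i 𝒯^i − Σ_{i<0} a^i 𝒯^i)`. -/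
def rmat (a : DOp) : DOp := fun n j =>
  if 0 < n then a n j / 2 else if n < 0 then -(a n j) / 2 else 0

/-- A difference operator is a *finite* formal sum. -/
def FinSupp (a : DOp) : Prop := {i : ℤ | a i ≠ 0}.Finite

/-- `N`-periodicity of all coefficient sequences. -/
def Periodic (N : ℕ) (a : DOp) : Prop := ∀ i j, a i (j + (N : ℤ)) = a i j

/-- The trace of an `N`-periodic difference operator: `Tr D = Σ_{j=1}^N a^0_j`. -/
def trace (N : ℕ) (a : DOp) : ℝ := ∑ j ∈ Finset.Icc (1 : ℤ) (N : ℤ), a 0 j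

/-- The commutator `[A, B] = AB − BA` of difference operators. -/
def bracket (a b : DOp) : DOp := mul a b - mul b a

/-- An order-zero operator: termwise multiplication by the sequence `α`. -/
def ord0 (α : ℤ → ℝ) : DOp := fun n j => if n = 0 then α j else 0

/-- The operator `c ∘ 𝒯^k` for a sequence `c`. -/
def singleOp (k : ℤ) (c : ℤ → ℝ) : DOp := fun n j => if n = k then c j else 0

/-- The pure shift operator `𝒯^k`. -/
def Tpow (k : ℤ) : DOp := singleOp k fun _ => 1

end DOp

open LaurentPolynomial in
/-- The matrix `M = Σ_{k=1}^{N−1} E_{k,k+1} + z E_{N,1}` (0-indexed here). -/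
def Mmat (N : ℕ) : Matrix (Fin N) (Fin N) (LaurentPolynomial ℝ) :=
  Matrix.of fun k l : Fin N =>
    (if (l : ℕ) = (k : ℕ) + 1 then 1 else 0)
      + (if (k : ℕ) = N - 1 ∧ (l : ℕ) = 0 then T 1 else 0)

open LaurentPolynomial in
/-- The matrix `M⁻¹ = Σ_{k=1}^{N−1} E_{k+1,k} + z⁻¹ E_{1,N}` (0-indexed here). -/
def Minv (N : ℕ) : Matrix (Fin N) (Fin N) (LaurentPolynomial ℝ) :=
  Matrix.of fun k l : Fin N =>
    (if (k : ℕ) = (l : ℕ) + 1 then 1 else 0)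
      + (if (k : ℕ) = 0 ∧ (l : ℕ) = N - 1 then T (-1) else 0)

/-- Integer powers `M^i` of `M` (using the explicit inverse for negative `i`). -/
def Mzpow (N : ℕ) (i : ℤ) : Matrix (Fin N) (Fin N) (LaurentPolynomial ℝ) :=
  if 0 ≤ i then Mmat N ^ i.toNat else Minv N ^ (-i).toNat

/-- `Φ(Σ_i a^i 𝒯^i) = Σ_i diag(a^i_1, …, a^i_N) · M^i`. -/
def Phi (N : ℕ) (a : DOp) : Matrix (Fin N) (Fin N) (LaurentPolynomial ℝ) :=
  ∑ᶠ i : ℤ,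
    Matrix.diagonal (fun k : Fin N => LaurentPolynomial.C (a i ((k : ℕ) + 1))) * Mzpow N i

/-! The powers of `M` have a closed form: the `(k, l)` entry of `M ^ i` is `z ^ e` when
`k + i = l + N e` and `0` otherwise (`shiftMatrix`). Hence the coefficient of `z ^ m` in the
`(k, l)` entry of `Φ(a)` is `a^{l-k+Nm}_{k+1}`, and since for fixed `k` every `i ∈ ℤ` is uniquely
`l - k + N m`, these coefficients recover an `N`-periodic operator and can be prescribed
arbitrarily. Multiplicativity is the commutation rule `M^i diag(β) = diag(𝒯^i β) M^i` for
`N`-periodic `β`, the matrix form of `𝒯^i ∘ β = (𝒯^i β) ∘ 𝒯^i`. -/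

open LaurentPolynomial Function

theorem Fin.eq_of_natCast_dvd_sub {N : ℕ} {p q : Fin N} (h : (N : ℤ) ∣ (p : ℤ) - q) : p = q := by
  have := Int.eq_zero_of_abs_lt_dvd h (abs_sub_lt_iff.2 ⟨by omega, by omega⟩)
  omega

theorem Int.divModEquiv_eq_iff {N : ℕ} [NeZero N] {x q : ℤ} {r : Fin N} :
    Int.divModEquiv N x = (q, r) ↔ x = r + N * q := by
  rw [← Equiv.eq_symm_apply, Int.divModEquiv_symm_apply]
  ring_nf

theorem Int.exists_fin_add_mul {N : ℕ} [NeZero N] (x : ℤ) : ∃ (r : Fin N) (q : ℤ), x = r + N * q :=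
  ⟨_, _, Int.divModEquiv_eq_iff.1 rfl⟩

def shiftMatrix (N : ℕ) (i : ℤ) : Matrix (Fin N) (Fin N) ℝ[T;T⁻¹] :=
  Matrix.of fun k l => if (N : ℤ) ∣ k + i - l then T ((k + i - l) / N) else 0

section shiftMatrix

variable {N : ℕ} {k l : Fin N} {i e : ℤ}

theorem shiftMatrix_apply_of_eq (h : (k : ℤ) + i = l + N * e) : shiftMatrix N i k l = T e := by
  have hdiff : (k : ℤ) + i - l = N * e := by omega
  simp [shiftMatrix, hdiff, Int.mul_ediv_cancel_left _ (Int.natCast_ne_zero.2 k.pos.ne')]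

theorem shiftMatrix_apply_of_not_dvd (h : ¬ (N : ℤ) ∣ k + i - l) : shiftMatrix N i k l = 0 :=
  if_neg h

theorem shiftMatrix_zero : shiftMatrix N 0 = 1 := by
  refine Matrix.ext fun k l => ?_
  by_cases h : k = l
  · rw [h, Matrix.one_apply_eq, shiftMatrix_apply_of_eq (e := 0) (by ring), T_zero]
  · rw [Matrix.one_apply_ne h, shiftMatrix_apply_of_not_dvd]
    exact fun hd => h (Fin.eq_of_natCast_dvd_sub (by simpa using hd))

theorem shiftMatrix_mul (i j : ℤ) : shiftMatrix N i * shiftMatrix N j = shiftMatrix N (i + j) := by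
  refine Matrix.ext fun k l => ?_
  have : NeZero N := ⟨k.pos.ne'⟩
  obtain ⟨p, e, hp⟩ := Int.exists_fin_add_mul (N := N) (k + i)
  rw [Matrix.mul_apply, Finset.sum_eq_single p]
  · rw [shiftMatrix_apply_of_eq hp]
    by_cases hd : (N : ℤ) ∣ p + j - l
    · obtain ⟨f, hf⟩ := hd
      rw [shiftMatrix_apply_of_eq (e := f) (by omega),
        shiftMatrix_apply_of_eq (e := e + f) (by linear_combination hp + hf), T_add]
    · rw [shiftMatrix_apply_of_not_dvd hd, shiftMatrix_apply_of_not_dvd, mul_zero]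
      refine fun hd' => hd ?_
      have : (p : ℤ) + j - l = k + (i + j) - l - N * e := by linarith
      exact this ▸ dvd_sub hd' (dvd_mul_right _ _)
  · intro p' _ hp'
    rw [shiftMatrix_apply_of_not_dvd, zero_mul]
    intro hd
    have : (p : ℤ) - p' = k + i - p' - N * e := by linarith
    exact hp' (Fin.eq_of_natCast_dvd_sub (this ▸ dvd_sub hd (dvd_mul_right _ _))).symm
  · simp

theorem shiftMatrix_one : shiftMatrix N 1 = Mmat N := by
  refine Matrix.ext fun k l => ?_
  simp only [Mmat, Matrix.of_apply]
  by_cases h₁ : (l : ℕ) = k + 1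
  · rw [shiftMatrix_apply_of_eq (e := 0) (by omega), if_pos h₁, if_neg (by omega), T_zero, add_zero]
  by_cases h₂ : (k : ℕ) = N - 1 ∧ (l : ℕ) = 0
  · rw [shiftMatrix_apply_of_eq (e := 1) (by omega), if_neg h₁, if_pos h₂, zero_add]
  rw [shiftMatrix_apply_of_not_dvd, if_neg h₁, if_neg h₂, add_zero]
  intro hd
  have := Int.eq_zero_of_abs_lt_dvd hd (abs_lt.2 ⟨by omega, by omega⟩)
  omega

theorem shiftMatrix_neg_one : shiftMatrix N (-1) = Minv N := by
  refine Matrix.ext fun k l => ?_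
  simp only [Minv, Matrix.of_apply]
  by_cases h₁ : (k : ℕ) = l + 1
  · rw [shiftMatrix_apply_of_eq (e := 0) (by omega), if_pos h₁, if_neg (by omega), T_zero, add_zero]
  by_cases h₂ : (k : ℕ) = 0 ∧ (l : ℕ) = N - 1
  · rw [shiftMatrix_apply_of_eq (e := -1) (by omega), if_neg h₁, if_pos h₂, zero_add]
  rw [shiftMatrix_apply_of_not_dvd, if_neg h₁, if_neg h₂, add_zero]
  intro hd
  have := Int.eq_zero_of_abs_lt_dvd hd (abs_lt.2 ⟨by omega, by omega⟩)
  omega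

end shiftMatrix

theorem Mmat_pow (N n : ℕ) : Mmat N ^ n = shiftMatrix N n := by
  induction n with
  | zero => exact shiftMatrix_zero.symm
  | succ n ih => rw [pow_succ, ih, ← shiftMatrix_one, shiftMatrix_mul, Nat.cast_succ]

theorem Minv_pow (N n : ℕ) : Minv N ^ n = shiftMatrix N (-n) := by
  induction n with
  | zero => exact shiftMatrix_zero.symm
  | succ n ih => rw [pow_succ, ih, ← shiftMatrix_neg_one, shiftMatrix_mul, Nat.cast_succ, neg_add]

theorem Mzpow_eq_shiftMatrix (N : ℕ) (i : ℤ) : Mzpow N i = shiftMatrix N i := by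
  unfold Mzpow
  split_ifs with h
  · rw [Mmat_pow, Int.toNat_of_nonneg h]
  · rw [Minv_pow, Int.toNat_of_nonneg (by omega), neg_neg]

theorem Mzpow_add (N : ℕ) (i j : ℤ) : Mzpow N i * Mzpow N j = Mzpow N (i + j) := by
  simp only [Mzpow_eq_shiftMatrix, shiftMatrix_mul]

theorem Mzpow_zero (N : ℕ) : Mzpow N 0 = 1 := by
  rw [Mzpow_eq_shiftMatrix, shiftMatrix_zero]

theorem Mmat_mul_Minv (N : ℕ) : Mmat N * Minv N = 1 := by
  rw [← shiftMatrix_one, ← shiftMatrix_neg_one, shiftMatrix_mul, add_neg_cancel, shiftMatrix_zero]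

theorem Minv_mul_Mmat (N : ℕ) : Minv N * Mmat N = 1 := by
  rw [← shiftMatrix_one, ← shiftMatrix_neg_one, shiftMatrix_mul, neg_add_cancel, shiftMatrix_zero]

def seqDiagonal (N : ℕ) : (ℤ → ℝ) →ₐ[ℝ] Matrix (Fin N) (Fin N) ℝ[T;T⁻¹] :=
  (Matrix.diagonalAlgHom ℝ).comp <| AlgHom.pi fun k : Fin N =>
    (Algebra.ofId ℝ ℝ[T;T⁻¹]).comp (Pi.evalAlgHom ℝ _ ((k : ℕ) + 1 : ℤ))

theorem seqDiagonal_apply (N : ℕ) (β : ℤ → ℝ) :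
    seqDiagonal N β = Matrix.diagonal fun k : Fin N => C (β ((k : ℕ) + 1)) := rfl

theorem Phi_eq_finsum (N : ℕ) (a : DOp) : Phi N a = ∑ᶠ i, seqDiagonal N (a i) * Mzpow N i := rfl

theorem shiftMatrix_mul_seqDiagonal {N : ℕ} {β : ℤ → ℝ} (hβ : Periodic β N) (i : ℤ) :
    shiftMatrix N i * seqDiagonal N β = seqDiagonal N (fun x => β (x + i)) * shiftMatrix N i := by
  refine Matrix.ext fun k l => ?_
  rw [seqDiagonal_apply, seqDiagonal_apply, Matrix.mul_diagonal, Matrix.diagonal_mul]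
  by_cases hd : (N : ℤ) ∣ k + i - l
  · obtain ⟨e, he⟩ := hd
    have : β (k + 1 + i) = β (l + 1) := by
      rw [show (k : ℤ) + 1 + i = l + 1 + e * N by linear_combination he]
      exact hβ.int_mul e _
    rw [this, mul_comm]
  · rw [shiftMatrix_apply_of_not_dvd hd, zero_mul, mul_zero]

theorem Mzpow_mul_seqDiagonal {N : ℕ} {β : ℤ → ℝ} (hβ : Periodic β N) (i : ℤ) :
    Mzpow N i * seqDiagonal N β = seqDiagonal N (fun x => β (x + i)) * Mzpow N i := by
  rw [Mzpow_eq_shiftMatrix, shiftMatrix_mul_seqDiagonal hβ]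

namespace DOp

theorem FinSupp.smul {a : DOp} (ha : FinSupp a) (c : ℝ) : FinSupp (c • a) :=
  HasFiniteSupport.smul_right (fun _ => c) ha

theorem mul_apply_eq_sum {a : DOp} {s : Finset ℤ} (h : support a ⊆ s) (b : DOp) (n : ℤ) :
    mul a b n = ∑ i ∈ s, a i * fun x => b (n - i) (x + i) := by
  funext x
  rw [Finset.sum_apply]
  exact finsum_eq_sum_of_support_subset _ fun i hi => h fun hai => hi (by simp [hai])

end DOp

theorem hasFiniteSupport_Phi_summand {a : DOp} (ha : DOp.FinSupp a) (N : ℕ) :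
    HasFiniteSupport fun i => seqDiagonal N (a i) * Mzpow N i :=
  (HasFiniteSupport.comp ha (map_zero (seqDiagonal N))).fun_mul_left _

theorem Phi_eq_sum {a : DOp} {s : Finset ℤ} (h : support a ⊆ s) (N : ℕ) :
    Phi N a = ∑ i ∈ s, seqDiagonal N (a i) * Mzpow N i :=
  finsum_eq_sum_of_support_subset _ fun i hi => h fun hai => hi (by simp [hai])

theorem Phi_add {a b : DOp} (ha : DOp.FinSupp a) (hb : DOp.FinSupp b) (N : ℕ) :
    Phi N (a + b) = Phi N a + Phi N b := by
  simp only [Phi_eq_finsum, Pi.add_apply, map_add, add_mul]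
  exact finsum_add_distrib (hasFiniteSupport_Phi_summand ha N) (hasFiniteSupport_Phi_summand hb N)

theorem Phi_smul {a : DOp} (ha : DOp.FinSupp a) (N : ℕ) (c : ℝ) : Phi N (c • a) = c • Phi N a := by
  simp only [Phi_eq_finsum, Pi.smul_apply, map_smul, smul_mul_assoc]
  exact (smul_finsum' c (hasFiniteSupport_Phi_summand ha N)).symm

theorem Phi_singleOp (N : ℕ) (k : ℤ) (c : ℤ → ℝ) :
    Phi N (DOp.singleOp k c) = seqDiagonal N c * Mzpow N k := by
  rw [Phi_eq_finsum, finsum_eq_single _ k]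
  · rw [show DOp.singleOp k c k = c from funext fun _ => if_pos rfl]
  · intro i hi
    have : DOp.singleOp k c i = 0 := funext fun _ => if_neg hi
    rw [this, map_zero, zero_mul]

theorem Phi_one (N : ℕ) : Phi N DOp.one = 1 := by
  change Phi N (DOp.singleOp 0 1) = 1
  rw [Phi_singleOp, map_one, Mzpow_zero, mul_one]

theorem Phi_mul {N : ℕ} {a b : DOp} (ha : DOp.FinSupp a) (hb : DOp.FinSupp b)
    (hpb : DOp.Periodic N b) : Phi N (DOp.mul a b) = Phi N a * Phi N b := by
  set s := ha.toFinset
  have hs : support a ⊆ s := fun i hi => ha.mem_toFinset.2 hi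
  have hshift (i : ℤ) : HasFiniteSupport fun n =>
      seqDiagonal N (a i) * seqDiagonal N (fun x => b (n - i) (x + i)) * Mzpow N n :=
    (HasFiniteSupport.fun_comp_of_injective (f := b) (sub_left_injective (b := i)) hb).subset
      fun n hn hb0 => hn <| by
        dsimp only
        rw [show (fun x => b (n - i) (x + i)) = 0 from funext fun x => congrFun hb0 (x + i),
          map_zero, mul_zero, zero_mul]
  calc Phi N (DOp.mul a b)
      = ∑ᶠ n, ∑ i ∈ s,
          seqDiagonal N (a i) * seqDiagonal N (fun x => b (n - i) (x + i)) * Mzpow N n := by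
        rw [Phi_eq_finsum]
        refine finsum_congr fun n => ?_
        rw [DOp.mul_apply_eq_sum hs, map_sum, Finset.sum_mul]
        simp only [map_mul]
    _ = ∑ i ∈ s, ∑ᶠ j,
          seqDiagonal N (a i) * seqDiagonal N (fun x => b j (x + i)) * Mzpow N (i + j) := by
        rw [finsum_sum_comm _ _ fun i _ => hshift i]
        refine Finset.sum_congr rfl fun i _ => ?_
        rw [← finsum_comp_equiv (Equiv.addLeft i)]
        simp only [Equiv.coe_addLeft, add_sub_cancel_left]
    _ = ∑ i ∈ s, seqDiagonal N (a i) * Mzpow N i * Phi N b := by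
        refine Finset.sum_congr rfl fun i _ => ?_
        rw [Phi_eq_finsum, mul_finsum' _ _ (hasFiniteSupport_Phi_summand hb N)]
        refine finsum_congr fun j => ?_
        rw [← mul_assoc, mul_assoc _ (Mzpow N i), Mzpow_mul_seqDiagonal (hpb j), ← mul_assoc,
          mul_assoc _ _ (Mzpow N j), Mzpow_add]
    _ = Phi N a * Phi N b := by rw [← Finset.sum_mul, ← Phi_eq_sum hs]

theorem coeff_C_mul_shiftMatrix {N : ℕ} (c : ℝ) (k l : Fin N) (i m : ℤ) :
    (C c * shiftMatrix N i k l).coeff m = if i = l - k + N * m then c else 0 := by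
  by_cases hd : (N : ℤ) ∣ k + i - l
  · obtain ⟨e, he⟩ := hd
    have hN : (N : ℤ) ≠ 0 := Int.natCast_ne_zero.2 k.pos.ne'
    rw [shiftMatrix_apply_of_eq (e := e) (by linarith), ← single_eq_C_mul_T,
      AddMonoidAlgebra.coeff_single, Finsupp.single_apply]
    refine if_congr ⟨?_, fun h => mul_left_cancel₀ hN (by linarith)⟩ rfl rfl
    rintro rfl
    linarith
  · rw [shiftMatrix_apply_of_not_dvd hd, mul_zero, if_neg]
    · rfl
    · rintro rfl
      exact hd ⟨m, by ring⟩

theorem coeff_Phi {N : ℕ} {a : DOp} (ha : DOp.FinSupp a) (k l : Fin N) (m : ℤ) :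
    (Phi N a k l).coeff m = a (l - k + N * m) (k + 1) := by
  classical
  rw [Phi_eq_sum (s := insert _ ha.toFinset)
      fun i hi => Finset.mem_insert_of_mem (ha.mem_toFinset.2 hi),
    Matrix.sum_apply, AddMonoidAlgebra.coeff_sum, Finsupp.finsetSum_apply]
  simp only [Mzpow_eq_shiftMatrix, seqDiagonal_apply, Matrix.diagonal_mul, coeff_C_mul_shiftMatrix]
  rw [Finset.sum_ite_eq', if_pos (Finset.mem_insert_self _ _)]

/-- The inverse of `Phi`: `a^i_j` is the coefficient of `z ^ m` in the `(k, l)` entry,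
where `j - 1 ≡ k` and `k + i = l + N m` (see `coeff_Phi`). -/
def PhiInv (N : ℕ) [NeZero N] (P : Matrix (Fin N) (Fin N) ℝ[T;T⁻¹]) : DOp := fun i j =>
  let k := (Int.divModEquiv N (j - 1)).2
  let ml := Int.divModEquiv N (k + i)
  (P k ml.2).coeff ml.1

section PhiInv

variable {N : ℕ} [NeZero N]

theorem PhiInv_apply_of_eq (P : Matrix (Fin N) (Fin N) ℝ[T;T⁻¹]) {i j q m : ℤ} {k l : Fin N}
    (hj : j - 1 = k + N * q) (hi : (k : ℤ) + i = l + N * m) : PhiInv N P i j = (P k l).coeff m := by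
  simp only [PhiInv, Int.divModEquiv_eq_iff.2 hj, Int.divModEquiv_eq_iff.2 hi]

theorem periodic_PhiInv (P : Matrix (Fin N) (Fin N) ℝ[T;T⁻¹]) : DOp.Periodic N (PhiInv N P) := by
  intro i j
  obtain ⟨k, q, hj⟩ := Int.exists_fin_add_mul (N := N) (j - 1)
  obtain ⟨l, m, hi⟩ := Int.exists_fin_add_mul (N := N) (k + i)
  rw [PhiInv_apply_of_eq P (q := q + 1) (by linear_combination hj) hi, PhiInv_apply_of_eq P hj hi]

theorem finSupp_PhiInv (P : Matrix (Fin N) (Fin N) ℝ[T;T⁻¹]) : DOp.FinSupp (PhiInv N P) := by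
  refine (Set.finite_iUnion fun kl : Fin N × Fin N =>
    ((P kl.1 kl.2).coeff.support.finite_toSet.image fun m => (kl.2 : ℤ) - kl.1 + N * m)).subset
      fun i hi => ?_
  obtain ⟨j, hj⟩ := Function.ne_iff.1 hi
  obtain ⟨k, q, hjk⟩ := Int.exists_fin_add_mul (N := N) (j - 1)
  obtain ⟨l, m, hkl⟩ := Int.exists_fin_add_mul (N := N) (k + i)
  rw [PhiInv_apply_of_eq P hjk hkl] at hj
  exact Set.mem_iUnion.2 ⟨(k, l), m, Finsupp.mem_support_iff.2 hj, by linarith⟩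

theorem Phi_PhiInv (P : Matrix (Fin N) (Fin N) ℝ[T;T⁻¹]) : Phi N (PhiInv N P) = P := by
  refine Matrix.ext fun k l => LaurentPolynomial.ext fun m => ?_
  rw [coeff_Phi (finSupp_PhiInv P),
    PhiInv_apply_of_eq P (k := k) (l := l) (m := m) (q := 0) (by ring) (by ring)]

theorem PhiInv_Phi {a : DOp} (ha : DOp.FinSupp a) (hpa : DOp.Periodic N a) :
    PhiInv N (Phi N a) = a := by
  funext i j
  obtain ⟨k, q, hj⟩ := Int.exists_fin_add_mul (N := N) (j - 1)
  obtain ⟨l, m, hi⟩ := Int.exists_fin_add_mul (N := N) (k + i)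
  rw [PhiInv_apply_of_eq _ hj hi, coeff_Phi ha, show (l : ℤ) - k + N * m = i by linarith,
    show j = k + 1 + q * N by linarith]
  exact (Periodic.int_mul (hpa i) q _).symm

end PhiInv

/-- `M` is invertible with the stated inverse, and `Φ` is an
isomorphism of ℝ-algebras from the `N`-periodic difference operators onto the
`N×N` matrices over the Laurent polynomial ring `ℝ[z, z⁻¹]`:
it is multiplicative, ℝ-linear, unital, and a bijection. -/
theorem stmt2 (N : ℕ) (hN : 1 ≤ N) :
    (Mmat N * Minv N = 1 ∧ Minv N * Mmat N = 1) ∧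
    (∀ a b : DOp, DOp.FinSupp a → DOp.FinSupp b →
      DOp.Periodic N a → DOp.Periodic N b →
      Phi N (DOp.mul a b) = Phi N a * Phi N b) ∧
    (∀ a b : DOp, DOp.FinSupp a → DOp.FinSupp b → ∀ c : ℝ,
      Phi N (fun i j => c * a i j + b i j) = c • Phi N a + Phi N b) ∧
    Phi N DOp.one = 1 ∧
    Set.BijOn (Phi N) {a : DOp | DOp.FinSupp a ∧ DOp.Periodic N a} Set.univ := by
  have : NeZero N := ⟨by omega⟩
  refine ⟨⟨Mmat_mul_Minv N, Minv_mul_Mmat N⟩, fun a b ha hb _ hpb => Phi_mul ha hb hpb,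
    fun a b ha hb c => ?_, Phi_one N, ?_⟩
  · rw [← Phi_smul ha, ← Phi_add (ha.smul c) hb]
    rfl
  · exact Set.InvOn.bijOn ⟨fun a ha => PhiInv_Phi ha.1 ha.2, fun P _ => Phi_PhiInv P⟩
      (Set.mapsTo_univ _ _) fun P _ => ⟨finSupp_PhiInv P, periodic_PhiInv P⟩
end
end

section
/- Let D be an N-periodic upper-triangular difference operator of order m (i.e. its coefficient of 𝒯^i vanishes unless 0 ≤ i ≤ m) and let Q be any N-periodic difference operator. Then the operator π_D(Q) := D·r(QD) − r(DQ)·D is again an upper-triangular difference operator of order at most m: its coefficient of 𝒯^i vanishes for all i < 0 and all i > m. -/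
noncomputable section

/-!
On the coefficients of `𝒯^n` with `n < 0` (resp. `n > m`), the only coefficients of `QD` and
`DQ` that enter `D·r(QD)` and `r(DQ)·D` are those of `𝒯^k` with `n - k ∈ [0, m]`; all these `k`
lie on the same side of `0` as `n`, where `r` acts as multiplication by `-½` (resp. `½`).
So the `n`-th coefficient of `π_D(Q)` equals `∓½` times that of `D(QD) - (DQ)D`, which vanishes
because `A(BC) = (AB)C` holds for every `B` once `A` and `C` are banded (supported on a bounded
range of powers of `𝒯`): then all the double sums involved are finite.
-/

namespace DOp

open Function Set

variable {a b c d : ℤ}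

lemma mem_Icc_of_apply_ne_zero {A : DOp} (hA : ∀ i ∉ Icc a b, ∀ j, A i j = 0) {i j : ℤ}
    (h : A i j ≠ 0) : i ∈ Icc a b :=
  by_contra fun hi => h (hA i hi j)

theorem mul_assoc_apply_of_banded {A C : DOp} (B : DOp)
    (hA : ∀ i ∉ Icc a b, ∀ j, A i j = 0) (hC : ∀ i ∉ Icc c d, ∀ j, C i j = 0) (n j : ℤ) :
    mul A (mul B C) n j = mul (mul A B) C n j := by
  set F : ℤ × ℤ → ℝ := fun p => A p.1 j * (B p.2 (j + p.1) * C (n - p.1 - p.2) (j + p.1 + p.2))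
  set G : ℤ × ℤ → ℝ := fun p => A p.2 j * B (p.1 - p.2) (j + p.2) * C (n - p.1) (j + p.1)
  -- reindex by `(i, k) ↦ (i + k, i)`
  let e : ℤ × ℤ ≃ ℤ × ℤ :=
    (Equiv.prodShear (Equiv.refl ℤ) Equiv.addLeft).trans (Equiv.prodComm ℤ ℤ)
  have hFG : ∀ p, F p = G (e p) := by
    rintro ⟨i, k⟩
    simp only [F, G, e, Equiv.trans_apply, Equiv.prodShear_apply, Equiv.prodComm_apply,
      Prod.swap_prod_mk, Equiv.coe_addLeft, Equiv.refl_apply, add_sub_cancel_left, sub_sub,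
      add_assoc, mul_assoc]
  have hF : (support F).Finite := by
    refine ((finite_Icc a b).prod (finite_Icc (n - b - d) (n - a - c))).subset ?_
    rintro ⟨i, k⟩ hp
    have hi := mem_Icc_of_apply_ne_zero hA (left_ne_zero_of_mul hp)
    have hk := mem_Icc_of_apply_ne_zero hC (right_ne_zero_of_mul (right_ne_zero_of_mul hp))
    exact ⟨hi, by constructor <;> linarith [hi.1, hi.2, hk.1, hk.2]⟩
  have hG : (support G).Finite := by
    refine ((finite_Icc (n - d) (n - c)).prod (finite_Icc a b)).subset ?_
    rintro ⟨l, i⟩ hp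
    have hi := mem_Icc_of_apply_ne_zero hA (left_ne_zero_of_mul (left_ne_zero_of_mul hp))
    have hl := mem_Icc_of_apply_ne_zero hC (right_ne_zero_of_mul hp)
    exact ⟨by constructor <;> linarith [hl.1, hl.2], hi⟩
  calc mul A (mul B C) n j
      = ∑ᶠ (i) (k), F (i, k) := finsum_congr fun i => mul_finsum _ _
    _ = ∑ᶠ p, F p := (finsum_curry F hF).symm
    _ = ∑ᶠ p, G p := finsum_eq_of_bijective e e.bijective hFG
    _ = ∑ᶠ (l) (i), G (l, i) := finsum_curry G hG
    _ = mul (mul A B) C n j := finsum_congr fun l => by simp only [G]; exact (finsum_mul _ _).symm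

lemma mul_apply_congr_right {A B B' : DOp} (hA : ∀ i ∉ Icc a b, ∀ j, A i j = 0) {n : ℤ}
    (hB : ∀ k, n - k ∈ Icc a b → B k = B' k) (j : ℤ) : mul A B n j = mul A B' n j := by
  refine finsum_congr fun i => ?_
  by_cases hi : i ∈ Icc a b
  · rw [hB (n - i) (by simpa using hi)]
  · rw [hA i hi j, zero_mul, zero_mul]

lemma mul_apply_congr_left {A A' C : DOp} (hC : ∀ i ∉ Icc c d, ∀ j, C i j = 0) {n : ℤ}
    (hA : ∀ k, n - k ∈ Icc c d → A k = A' k) (j : ℤ) : mul A C n j = mul A' C n j := by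
  refine finsum_congr fun i => ?_
  by_cases hi : n - i ∈ Icc c d
  · rw [hA i hi]
  · rw [hC _ hi, mul_zero, mul_zero]

lemma mul_smul_right (A B : DOp) (r : ℝ) : mul A (r • B) = r • mul A B := by
  ext n j
  simp only [mul, Pi.smul_apply, smul_eq_mul, mul_finsum, mul_left_comm]

lemma mul_smul_left (A B : DOp) (r : ℝ) : mul (r • A) B = r • mul A B := by
  ext n j
  simp only [mul, Pi.smul_apply, smul_eq_mul, mul_finsum, mul_assoc]

lemma rmat_of_neg (B : DOp) {k : ℤ} (hk : k < 0) : rmat B k = (-(1 / 2) : ℝ) • B k := by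
  ext j
  simp only [rmat, hk.not_gt, hk, if_true, if_false, Pi.smul_apply, smul_eq_mul]
  ring

lemma rmat_of_pos (B : DOp) {k : ℤ} (hk : 0 < k) : rmat B k = (1 / 2 : ℝ) • B k := by
  ext j
  simp only [rmat, hk, if_true, Pi.smul_apply, smul_eq_mul]
  ring

end DOp

theorem stmt5_general (m : ℕ) (D Q : DOp)
    (hD : ∀ i : ℤ, i < 0 ∨ (m : ℤ) < i → ∀ j, D i j = 0) :
    ∀ i : ℤ, i < 0 ∨ (m : ℤ) < i → ∀ j,
      (DOp.mul D (DOp.rmat (DOp.mul Q D)) - DOp.mul (DOp.rmat (DOp.mul D Q)) D) i j = 0 := by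
  intro n hn j
  have hD' : ∀ i ∉ Set.Icc (0 : ℤ) m, ∀ j, D i j = 0 := fun i hi =>
    hD i (by rwa [Set.mem_Icc, not_and_or, not_le, not_le] at hi)
  obtain ⟨r, hr⟩ : ∃ r : ℝ,
      ∀ B : DOp, ∀ k, n - k ∈ Set.Icc (0 : ℤ) m → DOp.rmat B k = (r • B) k := by
    rcases hn with hn | hn
    · exact ⟨_, fun B k hk => DOp.rmat_of_neg B (by linarith [hk.1])⟩
    · exact ⟨_, fun B k hk => DOp.rmat_of_pos B (by linarith [hk.2])⟩
  rw [Pi.sub_apply, Pi.sub_apply, sub_eq_zero,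
    DOp.mul_apply_congr_right hD' (hr _) j, DOp.mul_apply_congr_left hD' (hr _) j,
    DOp.mul_smul_right, DOp.mul_smul_left, Pi.smul_apply, Pi.smul_apply, Pi.smul_apply,
    Pi.smul_apply, DOp.mul_assoc_apply_of_banded Q hD' hD']

/-- If `D` is an `N`-periodic upper-triangular difference operator of
order `m` and `Q` is any `N`-periodic difference operator, then
`π_D(Q) = D·r(QD) − r(DQ)·D` is upper-triangular of order at most `m`:
its coefficient of `𝒯^i` vanishes for `i < 0` and for `i > m`. -/
theorem stmt5 (N m : ℕ) (D Q : DOp)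
    (hD : ∀ i : ℤ, i < 0 ∨ (m : ℤ) < i → ∀ j, D i j = 0)
    (hDper : DOp.Periodic N D)
    (hQ : DOp.FinSupp Q) (hQper : DOp.Periodic N Q) :
    ∀ i : ℤ, i < 0 ∨ (m : ℤ) < i → ∀ j,
      (DOp.mul D (DOp.rmat (DOp.mul Q D)) - DOp.mul (DOp.rmat (DOp.mul D Q)) D) i j = 0 :=
  stmt5_general m D Q hD
end
end

section
/- Let N > 2 and let D = α + β𝒯 + γ𝒯² where α, β, γ : ℤ → ℝ are N-periodic sequences. For i ∈ ℤ let δ_i denote the N-periodic sequence with (δ_i)_j = 1 if j ≡ i (mod N) and 0 otherwise, and set dα_i := δ_i, dβ_i := 𝒯^{−1}δ_i, dγ_i := 𝒯^{−2}δ_i (viewed as difference operators). Define π_D(P, Q) := Tr(r(PD)·QD) − Tr(r(DP)·DQ). Then for all i (indices of α, β, γ taken mod N): π_D(dα_i, dβ_{i−1}) = −½α_iβ_{i−1}; π_D(dα_i, dβ_i) = ½α_iβ_i; π_D(dα_i, dγ_{i−2}) = −½α_iγ_{i−2}; π_D(dα_i, dγ_i) = ½α_iγ_i; π_D(dβ_i,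 dβ_{i+1}) = α_{i+1}γ_i; π_D(dβ_i, dγ_{i−1}) = −½β_iγ_{i−1}; π_D(dβ_i, dγ_i) = ½β_iγ_i; and π_D applied to every other pair of the differentials dα_i, dβ_i, dγ_i (in particular all pairs dα_i, dα_j and all pairs dγ_i, dγ_j, and all pairs whose indices are not related as above modulo N) equals 0. -/
noncomputable section

/-- The `N`-periodic delta sequence supported on `j ≡ i (mod N)`. -/
def deltaSeq (N : ℕ) (i : ℤ) : ℤ → ℝ := fun j => if (j - i) % (N : ℤ) = 0 then 1 else 0

/-- The second-order operator `D = α + β𝒯 + γ𝒯²`. -/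
def D2 (α β γ : ℤ → ℝ) : DOp := fun n j =>
  if n = 0 then α j else if n = 1 then β j else if n = 2 then γ j else 0

/-- The Poisson tensor evaluated on differentials:
`π_D(P, Q) = Tr(r(PD)·QD) − Tr(r(DP)·DQ)`. -/
def piD (N : ℕ) (D P Q : DOp) : ℝ :=
  DOp.trace N (DOp.mul (DOp.rmat (DOp.mul P D)) (DOp.mul Q D))
    - DOp.trace N (DOp.mul (DOp.rmat (DOp.mul D P)) (DOp.mul D Q))

/-- `dα_i = δ_i`, as a difference operator. -/
def dA (N : ℕ) (i : ℤ) : DOp := DOp.ord0 (deltaSeq N i)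

/-- `dβ_i = 𝒯^{-1} ∘ δ_i`, as a difference operator. -/
def dB (N : ℕ) (i : ℤ) : DOp := DOp.mul (DOp.Tpow (-1)) (DOp.ord0 (deltaSeq N i))

/-- `dγ_i = 𝒯^{-2} ∘ δ_i`, as a difference operator. -/
def dC (N : ℕ) (i : ℤ) : DOp := DOp.mul (DOp.Tpow (-2)) (DOp.ord0 (deltaSeq N i))

/-
Each differential is a single-term operator `𝒯^{-m} ∘ δ_i = δ_{i+m} 𝒯^{-m}` (`m = 0, 1, 2` for
`dα, dβ, dγ`). For `P = 𝒯^{-m} ∘ δ_i` and `Q = 𝒯^{-m'} ∘ δ_j`, the coefficient of `𝒯^{k-m}` in `PD`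
and in `DP` involves only `D_k`, so each trace in `π_D(P, Q)` is a sum over `k` of `sign(k - m) / 2`
times a sum over one period of a product of two delta sequences and coefficients of `D`. Such a sum
picks out a single index and survives only when `j ≡ i + (k - m')` (first trace) or
`j ≡ i + (m - k)` (second trace) modulo `N`. For `D = α + β𝒯 + γ𝒯²` only `k = 0, 1, 2` contribute,
so each value of `π_D` is a combination of at most two congruence-gated monomials (the `ββ` terms of
`π_D(dα_i, dγ_j)` cancel), and for `N > 2` integers differing by `1` or `2` are incongruent.
-/

open Finset

lemma Int.ModEq.eq_of_sub_lt {n a b : ℤ} (h : a ≡ b [ZMOD n]) (h₁ : a - b < n) (h₂ : b - a < n) :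
    a = b := by
  have := Int.eq_zero_of_abs_lt_dvd h.dvd (abs_lt.2 ⟨by omega, by omega⟩)
  omega

lemma Int.not_modEq_of_lt {n a b : ℤ} (hab : a ≠ b) (h₁ : a - b < n) (h₂ : b - a < n) :
    ¬ a ≡ b [ZMOD n] :=
  fun h => hab (h.eq_of_sub_lt h₁ h₂)

lemma Int.modEq_iff_of_sub_eq {n a b c d : ℤ} (h : b - a = d - c) :
    a ≡ b [ZMOD n] ↔ c ≡ d [ZMOD n] := by
  rw [Int.modEq_iff_dvd, Int.modEq_iff_dvd, h]

lemma Int.modEq_add_iff_modEq_sub {n a b c : ℤ} : a ≡ b + c [ZMOD n] ↔ b ≡ a - c [ZMOD n] :=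
  ⟨fun h => by simpa using (h.sub_right c).symm, fun h => by simpa using (h.add_right c).symm⟩

lemma Function.Periodic.apply_eq_of_modEq {α : Type*} {f : ℤ → α} {n a b : ℤ} (hf : Function.Periodic f n)
    (h : a ≡ b [ZMOD n]) : f a = f b := by
  obtain ⟨t, rfl⟩ := Int.modEq_iff_add_fac.1 h
  simpa [mul_comm] using (hf.int_mul t a).symm

namespace DOp

lemma rmat_apply (a : DOp) (n j : ℤ) : rmat a n j = Int.sign n * a n j / 2 := by
  rcases lt_trichotomy n 0 with h | rfl | h
  · simp [rmat, h, h.not_gt, Int.sign_eq_neg_one_of_neg h]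
  · simp [rmat]
  · simp [rmat, h, Int.sign_eq_one_of_pos h]

lemma singleOp_mul_apply (k : ℤ) (c : ℤ → ℝ) (b : DOp) (n j : ℤ) :
    mul (singleOp k c) b n j = c j * b (n - k) (j + k) := by
  rw [mul, finsum_eq_single _ k fun i hi => by simp [singleOp, hi]]
  simp [singleOp]

lemma mul_singleOp_apply (k : ℤ) (c : ℤ → ℝ) (b : DOp) (n j : ℤ) :
    mul b (singleOp k c) n j = b (n - k) j * c (j + (n - k)) := by
  rw [mul, finsum_eq_single _ (n - k) fun i hi => by simp [singleOp, show n - i ≠ k by omega]]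
  simp [singleOp]

lemma Tpow_mul_ord0 (k : ℤ) (c : ℤ → ℝ) : mul (Tpow k) (ord0 c) = singleOp k fun j => c (j + k) := by
  funext n j
  by_cases h : n = k <;> simp [Tpow, singleOp_mul_apply, ord0, singleOp, h, sub_eq_zero]

lemma trace_mul_rmat {N : ℕ} {A : DOp} {S : Finset ℤ} (p : ℤ) (hA : ∀ k ∉ S, A (p + k) = 0)
    (B : DOp) :
    trace N (mul (rmat A) B) = ∑ k ∈ S, Int.sign (p + k) / 2 *
      ∑ j ∈ Icc (1 : ℤ) N, A (p + k) j * B (-(p + k)) (j + (p + k)) := by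
  simp_rw [mul_sum]
  rw [trace, sum_comm]
  refine sum_congr rfl fun j _ => ?_
  rw [mul, ← finsum_comp_equiv (Equiv.addLeft p)]
  rw [finsum_eq_sum_of_support_subset (s := S)]
  · refine sum_congr rfl fun k _ => ?_
    simp only [Equiv.coe_addLeft, rmat_apply, zero_sub, neg_add_rev]
    ring
  · intro k hk
    by_contra h
    simp [rmat_apply, hA k h] at hk

lemma Periodic.coeff {N : ℕ} {D : DOp} (hD : D.Periodic N) (k : ℤ) : Function.Periodic (D k) N :=
  hD k

end DOp

lemma deltaSeq_apply (N : ℕ) (a x : ℤ) : deltaSeq N a x = if a ≡ x [ZMOD N] then 1 else 0 := by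
  simp only [deltaSeq, Int.modEq_iff_dvd, Int.dvd_iff_emod_eq_zero]

lemma deltaSeq_add (N : ℕ) (a x s : ℤ) : deltaSeq N a (x + s) = deltaSeq N (a - s) x := by
  simp only [deltaSeq, show x + s - a = x - (a - s) by ring]

lemma periodic_deltaSeq (N : ℕ) (a : ℤ) : Function.Periodic (deltaSeq N a) N := by
  intro x
  simp [deltaSeq, show x + N - a = x - a + N by ring]

theorem sum_Icc_deltaSeq_mul {N : ℕ} (hN : 0 < N) (a : ℤ) {g : ℤ → ℝ}
    (hg : Function.Periodic g N) :
    ∑ j ∈ Icc (1 : ℤ) N, deltaSeq N a j * g j = g a := by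
  set j₀ := (a - 1) % N + 1
  have hj₀ : j₀ ∈ Icc (1 : ℤ) N := by
    have := Int.emod_nonneg (a - 1) (by omega : (N : ℤ) ≠ 0)
    have := Int.emod_lt_of_pos (a - 1) (by omega : (0 : ℤ) < N)
    simp only [mem_Icc]; omega
  have ha : a ≡ j₀ [ZMOD N] := by
    simpa using ((Int.mod_modEq (a - 1) N).add_right 1).symm
  rw [sum_eq_single_of_mem j₀ hj₀]
  · rw [deltaSeq_apply, if_pos ha, one_mul]
    exact hg.apply_eq_of_modEq ha.symm
  · intro j hj hne
    rw [deltaSeq_apply, if_neg, zero_mul]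
    intro h
    simp only [mem_Icc] at hj hj₀
    exact hne ((ha.symm.trans h).eq_of_sub_lt (by omega) (by omega)).symm

theorem sum_Icc_mul_deltaSeq {N : ℕ} (hN : 0 < N) (a : ℤ) {g : ℤ → ℝ}
    (hg : Function.Periodic g N) :
    ∑ j ∈ Icc (1 : ℤ) N, g j * deltaSeq N a j = g a := by
  simp only [mul_comm (g _), sum_Icc_deltaSeq_mul hN a hg]

/-- `𝒯^{-m} ∘ δ_i`, the differential of the coefficient of `𝒯^m` at `i`. -/
def dCoeff (N : ℕ) (m i : ℤ) : DOp := DOp.singleOp (-m) (deltaSeq N (i + m))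

open DOp

theorem piD_dCoeff {N : ℕ} (hN : 0 < N) {D : DOp} (hD : D.Periodic N) {S : Finset ℤ}
    (hS : ∀ k ∉ S, D k = 0) (m m' i j : ℤ) :
    piD N D (dCoeff N m i) (dCoeff N m' j) = ∑ k ∈ S, Int.sign (k - m) / 2 *
      ((if j ≡ i + (k - m') [ZMOD N] then D k i * D (m + m' - k) (i + k - m') else 0) -
        (if j ≡ i + (m - k) [ZMOD N] then D k (i + (m - k)) * D (m + m' - k) i else 0)) := by
  have hPD : ∀ k ∉ S, mul (dCoeff N m i) D (-m + k) = 0 := by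
    intro k hk; funext x; simp [dCoeff, singleOp_mul_apply, hS k hk]
  have hDP : ∀ k ∉ S, mul D (dCoeff N m i) (-m + k) = 0 := by
    intro k hk; funext x; simp [dCoeff, mul_singleOp_apply, hS k hk]
  rw [piD, trace_mul_rmat (-m) hPD, trace_mul_rmat (-m) hDP, ← sum_sub_distrib]
  refine sum_congr rfl fun k _ => ?_
  rw [← mul_sub, neg_add_eq_sub]
  congr 2
  · simp only [dCoeff, singleOp_mul_apply, mul_assoc, add_assoc,
      show k - m - -m = k by ring, show -(k - m) - -m' = m + m' - k by ring]
    rw [sum_Icc_deltaSeq_mul hN _ ?periodic, deltaSeq_apply]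
    case periodic =>
      exact ((hD.coeff k).add_const _).mul
        (((periodic_deltaSeq N _).add_const _).mul ((hD.coeff _).add_const _))
    simp only [show i + m + -m = i by ring, show i + m + (k - m) = i + k by ring,
      show i + m + (k - m + -m') = i + k - m' by ring,
      Int.modEq_iff_of_sub_eq (n := N) (show i + k - (j + m') = i + (k - m') - j by ring)]
    split_ifs <;> ring
  · simp only [dCoeff, mul_singleOp_apply, add_assoc, ← mul_assoc,
      show k - m - -m = k by ring, show -(k - m) - -m' = m + m' - k by ring,
      show k - m + (m + m' - k) = m' by ring, deltaSeq_add, add_sub_cancel_right]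
    rw [sum_Icc_mul_deltaSeq hN _ ?periodic, deltaSeq_apply]
    case periodic =>
      exact ((hD.coeff k).mul (periodic_deltaSeq N _)).mul ((hD.coeff _).add_const _)
    simp only [add_sub_assoc, Int.modEq_comm (a := i + (m - k))]
    split_ifs with h
    · rw [(hD.coeff k).apply_eq_of_modEq h, (hD.coeff _).apply_eq_of_modEq (h.add_right (k - m)),
        show i + (m - k) + (k - m) = i by ring]
      ring
    · ring

lemma dA_eq_dCoeff (N : ℕ) (i : ℤ) : dA N i = dCoeff N 0 i := by
  simp only [dA, dCoeff, neg_zero, add_zero]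
  rfl

lemma dB_eq_dCoeff (N : ℕ) (i : ℤ) : dB N i = dCoeff N 1 i := by
  simp [dB, dCoeff, Tpow_mul_ord0, deltaSeq_add]

lemma dC_eq_dCoeff (N : ℕ) (i : ℤ) : dC N i = dCoeff N 2 i := by
  simp [dC, dCoeff, Tpow_mul_ord0, deltaSeq_add]

lemma periodic_D2 {N : ℕ} {α β γ : ℤ → ℝ} (hα : Function.Periodic α N)
    (hβ : Function.Periodic β N) (hγ : Function.Periodic γ N) : (D2 α β γ).Periodic N := by
  intro k j
  simp only [D2, hα j, hβ j, hγ j]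

lemma D2_eq_zero_of_not_mem (α β γ : ℤ → ℝ) {k : ℤ} (hk : k ∉ ({0, 1, 2} : Finset ℤ)) : D2 α β γ k = 0 := by
  simp only [mem_insert, mem_singleton, not_or] at hk
  funext j
  simp [D2, hk]

section D2

variable {N : ℕ} (hN : 0 < N) {α β γ : ℤ → ℝ} (hD : (D2 α β γ).Periodic N)
include hN hD

lemma piD_dA_dA (i j : ℤ) : piD N (D2 α β γ) (dA N i) (dA N j) = 0 := by
  rw [dA_eq_dCoeff, dA_eq_dCoeff, piD_dCoeff hN hD (fun k => D2_eq_zero_of_not_mem α β γ)]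
  simp [sum_insert, D2]

lemma piD_dA_dB (i j : ℤ) : piD N (D2 α β γ) (dA N i) (dB N j) =
    (if j ≡ i [ZMOD N] then α i * β i / 2 else 0) -
      (if j ≡ i - 1 [ZMOD N] then α i * β (i - 1) / 2 else 0) := by
  rw [dA_eq_dCoeff, dB_eq_dCoeff, piD_dCoeff hN hD (fun k => D2_eq_zero_of_not_mem α β γ)]
  simp [sum_insert, D2, add_sub_assoc, ← sub_eq_add_neg, Int.sign_eq_one_of_pos]
  split_ifs <;> ring

lemma piD_dB_dA (i j : ℤ) : piD N (D2 α β γ) (dB N i) (dA N j) =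
    (if i ≡ j - 1 [ZMOD N] then α (i + 1) * β i / 2 else 0) -
      (if i ≡ j [ZMOD N] then α i * β i / 2 else 0) := by
  rw [dB_eq_dCoeff, dA_eq_dCoeff, piD_dCoeff hN hD (fun k => D2_eq_zero_of_not_mem α β γ)]
  simp [sum_insert, D2, Int.sign_eq_one_of_pos, Int.modEq_add_iff_modEq_sub (a := j)]
  split_ifs <;> ring

lemma piD_dA_dC (i j : ℤ) : piD N (D2 α β γ) (dA N i) (dC N j) =
    (if j ≡ i [ZMOD N] then α i * γ i / 2 else 0) -
      (if j ≡ i - 2 [ZMOD N] then α i * γ (i - 2) / 2 else 0) := by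
  rw [dA_eq_dCoeff, dC_eq_dCoeff, piD_dCoeff hN hD (fun k => D2_eq_zero_of_not_mem α β γ)]
  simp [sum_insert, D2, add_sub_assoc, ← sub_eq_add_neg, Int.sign_eq_one_of_pos]
  split_ifs <;> ring

lemma piD_dC_dA (i j : ℤ) : piD N (D2 α β γ) (dC N i) (dA N j) =
    (if i ≡ j - 2 [ZMOD N] then α (i + 2) * γ i / 2 else 0) -
      (if i ≡ j [ZMOD N] then α i * γ i / 2 else 0) := by
  rw [dC_eq_dCoeff, dA_eq_dCoeff, piD_dCoeff hN hD (fun k => D2_eq_zero_of_not_mem α β γ)]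
  simp [sum_insert, D2, Int.sign_eq_one_of_pos, Int.modEq_add_iff_modEq_sub (a := j)]
  split_ifs <;> ring

lemma piD_dB_dB (i j : ℤ) : piD N (D2 α β γ) (dB N i) (dB N j) =
    (if j ≡ i + 1 [ZMOD N] then α (i + 1) * γ i else 0) -
      (if i ≡ j + 1 [ZMOD N] then α i * γ (i - 1) else 0) := by
  rw [dB_eq_dCoeff, dB_eq_dCoeff, piD_dCoeff hN hD (fun k => D2_eq_zero_of_not_mem α β γ)]
  simp [sum_insert, D2, add_sub_assoc, ← sub_eq_add_neg, Int.sign_eq_one_of_pos,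
    ← Int.modEq_add_iff_modEq_sub (a := i) (b := j)]
  split_ifs <;> ring

lemma piD_dB_dC (i j : ℤ) : piD N (D2 α β γ) (dB N i) (dC N j) =
    (if j ≡ i [ZMOD N] then β i * γ i / 2 else 0) -
      (if j ≡ i - 1 [ZMOD N] then β i * γ (i - 1) / 2 else 0) := by
  rw [dB_eq_dCoeff, dC_eq_dCoeff, piD_dCoeff hN hD (fun k => D2_eq_zero_of_not_mem α β γ)]
  simp [sum_insert, D2, add_sub_assoc, ← sub_eq_add_neg, Int.sign_eq_one_of_pos]
  split_ifs <;> ring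

lemma piD_dC_dB (i j : ℤ) : piD N (D2 α β γ) (dC N i) (dB N j) =
    (if i ≡ j - 1 [ZMOD N] then β (i + 1) * γ i / 2 else 0) -
      (if i ≡ j [ZMOD N] then β i * γ i / 2 else 0) := by
  rw [dC_eq_dCoeff, dB_eq_dCoeff, piD_dCoeff hN hD (fun k => D2_eq_zero_of_not_mem α β γ)]
  simp [sum_insert, D2, Int.sign_eq_one_of_pos, Int.modEq_add_iff_modEq_sub (a := j)]
  split_ifs <;> ring

lemma piD_dC_dC (i j : ℤ) : piD N (D2 α β γ) (dC N i) (dC N j) = 0 := by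
  rw [dC_eq_dCoeff, dC_eq_dCoeff, piD_dCoeff hN hD (fun k => D2_eq_zero_of_not_mem α β γ)]
  simp [sum_insert, D2]

end D2

/-- The values of the Poisson structure on second-order operators:
the restriction of `π` to `D = α + β𝒯 + γ𝒯²` in the coordinates `α_i, β_i, γ_i`. -/
theorem stmt8 (N : ℕ) (hN : 2 < N) (α β γ : ℤ → ℝ)
    (hα : ∀ j : ℤ, α (j + (N : ℤ)) = α j)
    (hβ : ∀ j : ℤ, β (j + (N : ℤ)) = β j)
    (hγ : ∀ j : ℤ, γ (j + (N : ℤ)) = γ j) :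
    (∀ i : ℤ, piD N (D2 α β γ) (dA N i) (dB N (i - 1)) = -(α i * β (i - 1)) / 2) ∧
    (∀ i : ℤ, piD N (D2 α β γ) (dA N i) (dB N i) = α i * β i / 2) ∧
    (∀ i : ℤ, piD N (D2 α β γ) (dA N i) (dC N (i - 2)) = -(α i * γ (i - 2)) / 2) ∧
    (∀ i : ℤ, piD N (D2 α β γ) (dA N i) (dC N i) = α i * γ i / 2) ∧
    (∀ i : ℤ, piD N (D2 α β γ) (dB N i) (dB N (i + 1)) = α (i + 1) * γ i) ∧
    (∀ i : ℤ, piD N (D2 α β γ) (dB N i) (dC N (i - 1)) = -(β i * γ (i - 1)) / 2) ∧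
    (∀ i : ℤ, piD N (D2 α β γ) (dB N i) (dC N i) = β i * γ i / 2) ∧
    -- all other pairs of differentials have vanishing bracket:
    (∀ i j : ℤ, piD N (D2 α β γ) (dA N i) (dA N j) = 0) ∧
    (∀ i j : ℤ, piD N (D2 α β γ) (dC N i) (dC N j) = 0) ∧
    (∀ i j : ℤ, ¬ j ≡ i - 1 [ZMOD (N : ℤ)] → ¬ j ≡ i [ZMOD (N : ℤ)] →
      piD N (D2 α β γ) (dA N i) (dB N j) = 0 ∧ piD N (D2 α β γ) (dB N j) (dA N i) = 0) ∧
    (∀ i j : ℤ, ¬ j ≡ i - 2 [ZMOD (N : ℤ)] → ¬ j ≡ i [ZMOD (N : ℤ)] →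
      piD N (D2 α β γ) (dA N i) (dC N j) = 0 ∧ piD N (D2 α β γ) (dC N j) (dA N i) = 0) ∧
    (∀ i j : ℤ, ¬ j ≡ i + 1 [ZMOD (N : ℤ)] → ¬ i ≡ j + 1 [ZMOD (N : ℤ)] →
      piD N (D2 α β γ) (dB N i) (dB N j) = 0) ∧
    (∀ i j : ℤ, ¬ j ≡ i - 1 [ZMOD (N : ℤ)] → ¬ j ≡ i [ZMOD (N : ℤ)] →
      piD N (D2 α β γ) (dB N i) (dC N j) = 0 ∧ piD N (D2 α β γ) (dC N j) (dB N i) = 0) := by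
  have hN₀ : 0 < N := by omega
  have hD : (D2 α β γ).Periodic N := periodic_D2 hα hβ hγ
  refine ⟨fun i => ?_, fun i => ?_, fun i => ?_, fun i => ?_, fun i => ?_, fun i => ?_, fun i => ?_,
    piD_dA_dA hN₀ hD, piD_dC_dC hN₀ hD, fun i j h₁ h₂ => ?_, fun i j h₁ h₂ => ?_,
    fun i j h₁ h₂ => ?_, fun i j h₁ h₂ => ?_⟩
  all_goals simp (disch := omega) [*, piD_dA_dB hN₀ hD, piD_dB_dA hN₀ hD, piD_dA_dC hN₀ hD,
    piD_dC_dA hN₀ hD, piD_dB_dB hN₀ hD, piD_dB_dC hN₀ hD, piD_dC_dB hN₀ hD, Int.not_modEq_of_lt,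
    neg_div]
end
end

section
/- Let V : ℤ → ℝ² and α, β, γ : ℤ → ℝ satisfy the three-term recurrence α_j V_j + β_j V_{j+1} + γ_j V_{j+2} = 0 for all j ∈ ℤ. Fix i ∈ ℤ and assume γ_{i−1} ≠ 0, γ_i ≠ 0, β_{i−1} ≠ 0, β_i ≠ 0, det(V_{i−1}, V_{i+1}) ≠ 0 and det(V_i, V_{i+2}) ≠ 0, where det(u, v) := u₁v₂ − u₂v₁. Then det(V_{i−1}, V_i)·det(V_{i+1}, V_{i+2}) / (det(V_{i−1}, V_{i+1})·det(V_i, V_{i+2})) = α_i γ_{i−1} / (β_{i−1} β_i). -/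
noncomputable section

/-- The 2×2 determinant `det(u, v) = u₁v₂ − u₂v₁` of the matrix with columns `u, v`. -/
def det2 (u v : Fin 2 → ℝ) : ℝ := u 0 * v 1 - u 1 * v 0

/-- If `α_j V_j + β_j V_{j+1} + γ_j V_{j+2} = 0` for all `j`, then the
cross-ratio `det(V_{i−1},V_i)·det(V_{i+1},V_{i+2}) / (det(V_{i−1},V_{i+1})·det(V_i,V_{i+2}))`
equals `α_i γ_{i−1} / (β_{i−1} β_i)`. -/
theorem stmt9 (V : ℤ → Fin 2 → ℝ) (α β γ : ℤ → ℝ)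
    (hrec : ∀ j : ℤ, α j • V j + β j • V (j + 1) + γ j • V (j + 2) = 0)
    (i : ℤ)
    (hγ1 : γ (i - 1) ≠ 0) (hγ2 : γ i ≠ 0)
    (hβ1 : β (i - 1) ≠ 0) (hβ2 : β i ≠ 0)
    (hd1 : det2 (V (i - 1)) (V (i + 1)) ≠ 0)
    (hd2 : det2 (V i) (V (i + 2)) ≠ 0) :
    det2 (V (i - 1)) (V i) * det2 (V (i + 1)) (V (i + 2))
        / (det2 (V (i - 1)) (V (i + 1)) * det2 (V i) (V (i + 2)))
      = α i * γ (i - 1) / (β (i - 1) * β i) := by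
  have h1 := hrec (i - 1)
  have h2 := hrec i
  have e1 : i - 1 + 1 = i := by ring
  have e2 : i - 1 + 2 = i + 1 := by ring
  rw [e1, e2] at h1
  have h10 := congrFun h1 0
  have h11 := congrFun h1 1
  have h20 := congrFun h2 0
  have h21 := congrFun h2 1
  simp [Pi.add_apply, Pi.smul_apply, smul_eq_mul] at h10 h11 h20 h21
  -- key determinant relations
  have hA : β (i - 1) * det2 (V (i - 1)) (V i)
      = -(γ (i - 1)) * det2 (V (i - 1)) (V (i + 1)) := by
    unfold det2
    linear_combination (V (i - 1) 0) * h11 - (V (i - 1) 1) * h10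
  have hB : γ i * det2 (V i) (V (i + 2))
      = -(β i) * det2 (V i) (V (i + 1)) := by
    unfold det2
    linear_combination (V i 0) * h21 - (V i 1) * h20
  have hC : γ i * det2 (V (i + 1)) (V (i + 2))
      = α i * det2 (V i) (V (i + 1)) := by
    unfold det2
    linear_combination (V (i + 1) 0) * h21 - (V (i + 1) 1) * h20
  have hD : det2 (V i) (V (i + 1)) ≠ 0 := by
    intro h
    apply hd2
    have := hB
    rw [h, mul_zero] at this
    exact (mul_eq_zero.mp this).resolve_left hγ2
  rw [div_eq_div_iff (mul_ne_zero hd1 hd2) (mul_ne_zero hβ1 hβ2)]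
  have key : γ i * (det2 (V (i - 1)) (V i) * det2 (V (i + 1)) (V (i + 2)) * (β (i - 1) * β i))
      = γ i * (α i * γ (i - 1) * (det2 (V (i - 1)) (V (i + 1)) * det2 (V i) (V (i + 2)))) := by
    linear_combination (det2 (V (i - 1)) (V i) * β (i - 1) * β i) * hC
      + (-(α i * γ (i - 1) * det2 (V (i - 1)) (V (i + 1)))) * hB
      + (α i * β i * det2 (V i) (V (i + 1))) * hA
  exact mul_left_cancel₀ hγ2 key
end
end

section
/- Let N > 4 and let R be the field of rational functions over ℝ in the variables α_i, β_i, γ_i, i ∈ ℤ/N. Let {·,·} : R × R → R be ℝ-bilinear, antisymmetric, and a derivation in each argument, whose values on the generators are (indices mod N): {α_i, β_{i−1}} = −½α_iβ_{i−1}, {α_i, β_i} = ½α_iβ_i, {α_i, γ_{i−2}} = −½α_iγ_{i−2}, {α_i, γ_i} = ½α_iγ_i, {β_i, β_{i+1}} = α_{i+1}γ_i, {β_i, γ_{i−1}} = −½β_iγ_{i−1}, {β_i, γ_i} = ½β_iγ_i, and {·,·} vanishes on all other pairs of generators. Define x_i := α_i γ_{i−1} / (β_{i−1} β_i). Then for all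 i: {x_i, x_{i+1}} = x_i x_{i+1} (x_i + x_{i+1} − 1) and {x_i, x_{i+2}} = x_i x_{i+1} x_{i+2}. -/
/-!
The bracket of two quotients is given by the quotient rule in terms of brackets of numerators
and denominators. These are products of generators, so the Leibniz rule reduces everything to the
table of brackets of generators. For `N > 4` the indices `i - 1, …, i + 3` are distinct modulo
`N`, so each pair of generators falls under exactly one entry of the table, and what remains is
an identity of rational functions.
-/

noncomputable section

/-- The field of rational functions over ℝ in the variables `α_i, β_i, γ_i`, `i ∈ ℤ/N`
(the fraction field of the polynomial ring in these `3N` variables). -/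
abbrev RF (N : ℕ) := FractionRing (MvPolynomial (Fin 3 × ZMod N) ℝ)

/-- The generator `α_i`. -/
def va (N : ℕ) (i : ZMod N) : RF N :=
  algebraMap (MvPolynomial (Fin 3 × ZMod N) ℝ) (RF N) (MvPolynomial.X (0, i))

/-- The generator `β_i`. -/
def vb (N : ℕ) (i : ZMod N) : RF N :=
  algebraMap (MvPolynomial (Fin 3 × ZMod N) ℝ) (RF N) (MvPolynomial.X (1, i))

/-- The generator `γ_i`. -/
def vc (N : ℕ) (i : ZMod N) : RF N :=
  algebraMap (MvPolynomial (Fin 3 × ZMod N) ℝ) (RF N) (MvPolynomial.X (2, i))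

/-- The real scalar `c`, as a constant rational function. -/
def cst (N : ℕ) (c : ℝ) : RF N :=
  algebraMap (MvPolynomial (Fin 3 × ZMod N) ℝ) (RF N) (MvPolynomial.C c)

/-- The cross-ratio coordinate `x_i = α_i γ_{i−1} / (β_{i−1} β_i)`. -/
def xq (N : ℕ) (i : ZMod N) : RF N := va N i * vc N (i - 1) / (vb N (i - 1) * vb N i)

structure IsAntisymmBiderivation {K : Type*} [Field K] (P : K → K → K) : Prop where
  antisymm : ∀ x y, P x y = -P y x
  mul_right : ∀ x y z, P x (y * z) = y * P x z + z * P x y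

namespace IsAntisymmBiderivation

variable {K : Type*} [Field K] {P : K → K → K}

theorem mul_left (hP : IsAntisymmBiderivation P) (x y z : K) :
    P (x * y) z = x * P y z + y * P x z := by
  rw [hP.antisymm, hP.mul_right, hP.antisymm z y, hP.antisymm z x]
  ring

theorem one_right (hP : IsAntisymmBiderivation P) (x : K) : P x 1 = 0 := by
  have h := hP.mul_right x 1 1
  rw [mul_one, one_mul] at h
  linear_combination -h

theorem inv_right (hP : IsAntisymmBiderivation P) (x : K) {z : K} (hz : z ≠ 0) :
    P x z⁻¹ = -(P x z / z ^ 2) := by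
  have h := hP.mul_right x z z⁻¹
  rw [mul_inv_cancel₀ hz, hP.one_right] at h
  field_simp at h ⊢
  linear_combination -h

theorem inv_left (hP : IsAntisymmBiderivation P) {z : K} (hz : z ≠ 0) (x : K) :
    P z⁻¹ x = -(P z x / z ^ 2) := by
  rw [hP.antisymm, hP.inv_right x hz, hP.antisymm x z]
  ring

theorem div_div (hP : IsAntisymmBiderivation P) (a : K) {b : K} (c : K) {d : K} (hb : b ≠ 0)
    (hd : d ≠ 0) :
    P (a / b) (c / d) = (b * d * P a c - b * c * P a d - a * d * P b c + a * c * P b d) /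
      (b ^ 2 * d ^ 2) := by
  simp only [div_eq_mul_inv a, div_eq_mul_inv c, hP.mul_left, hP.mul_right, hP.inv_right _ hd,
    hP.inv_left hb]
  field_simp
  ring

end IsAntisymmBiderivation

theorem ZMod.natCast_ne_zero_of_lt {N : ℕ} (k : ℕ) (hk : 0 < k) (hkN : k < N) :
    (k : ZMod N) ≠ 0 := by
  rw [Ne, ZMod.natCast_eq_zero_iff]
  exact fun h => absurd (Nat.le_of_dvd hk h) (by omega)

theorem vb_ne_zero (N : ℕ) (i : ZMod N) : vb N i ≠ 0 := by
  rw [vb, Ne, IsFractionRing.to_map_eq_zero_iff]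
  exact MvPolynomial.X_ne_zero _

theorem cst_half (N : ℕ) : cst N (1 / 2) = 1 / 2 := by
  rw [cst, ← MvPolynomial.algebraMap_eq, ← IsScalarTower.algebraMap_apply, map_div₀, map_one,
    map_ofNat]

structure IsDifferenceOperatorBracket (N : ℕ) (P : RF N → RF N → RF N) : Prop
    extends IsAntisymmBiderivation P where
  va_vb_sub_one : ∀ i, P (va N i) (vb N (i - 1)) = -(cst N (1/2)) * va N i * vb N (i - 1)
  va_vb_self : ∀ i, P (va N i) (vb N i) = cst N (1/2) * va N i * vb N i
  va_vc_sub_two : ∀ i, P (va N i) (vc N (i - 2)) = -(cst N (1/2)) * va N i * vc N (i - 2)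
  va_vc_self : ∀ i, P (va N i) (vc N i) = cst N (1/2) * va N i * vc N i
  vb_vb_add_one : ∀ i, P (vb N i) (vb N (i + 1)) = va N (i + 1) * vc N i
  vb_vc_sub_one : ∀ i, P (vb N i) (vc N (i - 1)) = -(cst N (1/2)) * vb N i * vc N (i - 1)
  vb_vc_self : ∀ i, P (vb N i) (vc N i) = cst N (1/2) * vb N i * vc N i
  va_va : ∀ i j, P (va N i) (va N j) = 0
  vc_vc : ∀ i j, P (vc N i) (vc N j) = 0
  va_vb_of_ne : ∀ i j, j ≠ i - 1 → j ≠ i → P (va N i) (vb N j) = 0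
  va_vc_of_ne : ∀ i j, j ≠ i - 2 → j ≠ i → P (va N i) (vc N j) = 0
  vb_vb_of_ne : ∀ i j, j ≠ i + 1 → i ≠ j + 1 → P (vb N i) (vb N j) = 0
  vb_vc_of_ne : ∀ i j, j ≠ i - 1 → j ≠ i → P (vb N i) (vc N j) = 0

namespace IsDifferenceOperatorBracket

variable {N : ℕ} {P : RF N → RF N → RF N}

theorem vb_va (H : IsDifferenceOperatorBracket N P) (i j : ZMod N) :
    P (vb N j) (va N i) = -P (va N i) (vb N j) :=
  H.antisymm _ _

theorem vc_va (H : IsDifferenceOperatorBracket N P) (i j : ZMod N) :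
    P (vc N j) (va N i) = -P (va N i) (vc N j) :=
  H.antisymm _ _

theorem vc_vb (H : IsDifferenceOperatorBracket N P) (i j : ZMod N) :
    P (vc N j) (vb N i) = -P (vb N i) (vc N j) :=
  H.antisymm _ _

/- The nonzero entries of the table, stated for an arbitrary index pair subject to an equation
that `simp` discharges by `ring`, so that they apply whatever form the indices take. -/

theorem va_vb_of_eq_sub_one (H : IsDifferenceOperatorBracket N P) {i j : ZMod N}
    (h : j = i - 1) : P (va N i) (vb N j) = -(1 / 2) * va N i * vb N j := by
  rw [h, H.va_vb_sub_one, cst_half]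

theorem va_vb_of_eq (H : IsDifferenceOperatorBracket N P) {i j : ZMod N}
    (h : j = i) : P (va N i) (vb N j) = 1 / 2 * va N i * vb N j := by
  rw [h, H.va_vb_self, cst_half]

theorem va_vc_of_eq_sub_two (H : IsDifferenceOperatorBracket N P) {i j : ZMod N}
    (h : j = i - 2) : P (va N i) (vc N j) = -(1 / 2) * va N i * vc N j := by
  rw [h, H.va_vc_sub_two, cst_half]

theorem va_vc_of_eq (H : IsDifferenceOperatorBracket N P) {i j : ZMod N}
    (h : j = i) : P (va N i) (vc N j) = 1 / 2 * va N i * vc N j := by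
  rw [h, H.va_vc_self, cst_half]

theorem vb_vc_of_eq_sub_one (H : IsDifferenceOperatorBracket N P) {i j : ZMod N}
    (h : j = i - 1) : P (vb N i) (vc N j) = -(1 / 2) * vb N i * vc N j := by
  rw [h, H.vb_vc_sub_one, cst_half]

theorem vb_vc_of_eq (H : IsDifferenceOperatorBracket N P) {i j : ZMod N}
    (h : j = i) : P (vb N i) (vc N j) = 1 / 2 * vb N i * vc N j := by
  rw [h, H.vb_vc_self, cst_half]

theorem vb_vb_of_eq_add_one (H : IsDifferenceOperatorBracket N P) {i j : ZMod N}
    (h : j = i + 1) : P (vb N i) (vb N j) = va N j * vc N i := by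
  rw [h, H.vb_vb_add_one]

theorem bracket_xq (H : IsDifferenceOperatorBracket N P) (hN : 4 < N) (i : ZMod N) :
    P (xq N i) (xq N (i + 1)) = xq N i * xq N (i + 1) * (xq N i + xq N (i + 1) - 1) ∧
      P (xq N i) (xq N (i + 2)) = xq N i * xq N (i + 1) * xq N (i + 2) := by
  have h1 : (1 : ZMod N) ≠ 0 := by exact_mod_cast ZMod.natCast_ne_zero_of_lt 1 one_pos (by omega)
  have h2 : (2 : ZMod N) ≠ 0 := by exact_mod_cast ZMod.natCast_ne_zero_of_lt 2 two_pos (by omega)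
  have h3 : (3 : ZMod N) ≠ 0 := by exact_mod_cast ZMod.natCast_ne_zero_of_lt 3 three_pos (by omega)
  have h4 : (4 : ZMod N) ≠ 0 := by exact_mod_cast ZMod.natCast_ne_zero_of_lt 4 four_pos hN
  constructor <;>
  · simp only [xq, add_sub_cancel_right, show i + 2 - 1 = i + 1 by ring]
    rw [H.div_div _ _ (mul_ne_zero (vb_ne_zero _ _) (vb_ne_zero _ _))
      (mul_ne_zero (vb_ne_zero _ _) (vb_ne_zero _ _))]
    simp only [H.mul_left, H.mul_right, H.vb_va, H.vc_va, H.vc_vb]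
    -- an index inequality reduces, after `ring_nf`, to one of `1, 2, 3, 4 ≠ 0` in `ZMod N`
    simp (disch := first | ring1 | (rw [← sub_ne_zero]; ring_nf; simp [h1, h2, h3, h4])) only
      [H.va_va, H.vc_vc, H.va_vb_of_eq_sub_one, H.va_vb_of_eq, H.va_vc_of_eq_sub_two, H.va_vc_of_eq,
        H.vb_vc_of_eq_sub_one, H.vb_vc_of_eq, H.vb_vb_of_eq_add_one,
        H.va_vb_of_ne, H.va_vc_of_ne, H.vb_vc_of_ne, H.vb_vb_of_ne]
    field_simp [vb_ne_zero]
    ring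

end IsDifferenceOperatorBracket

theorem stmt10_general (N : ℕ) (hN : 4 < N) (Pb : RF N → RF N → RF N)
    -- antisymmetry:
    (hanti : ∀ x y : RF N, Pb x y = -Pb y x)
    -- derivation in each argument:
    (hder2 : ∀ x y z : RF N, Pb x (y * z) = y * Pb x z + z * Pb x y)
    -- values on the generators:
    (hab1 : ∀ i : ZMod N, Pb (va N i) (vb N (i - 1)) = -(cst N (1/2)) * va N i * vb N (i - 1))
    (hab2 : ∀ i : ZMod N, Pb (va N i) (vb N i) = cst N (1/2) * va N i * vb N i)
    (hac1 : ∀ i : ZMod N, Pb (va N i) (vc N (i - 2)) = -(cst N (1/2)) * va N i * vc N (i - 2))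
    (hac2 : ∀ i : ZMod N, Pb (va N i) (vc N i) = cst N (1/2) * va N i * vc N i)
    (hbb : ∀ i : ZMod N, Pb (vb N i) (vb N (i + 1)) = va N (i + 1) * vc N i)
    (hbc1 : ∀ i : ZMod N, Pb (vb N i) (vc N (i - 1)) = -(cst N (1/2)) * vb N i * vc N (i - 1))
    (hbc2 : ∀ i : ZMod N, Pb (vb N i) (vc N i) = cst N (1/2) * vb N i * vc N i)
    -- vanishing on all other pairs of generators:
    (haa : ∀ i j : ZMod N, Pb (va N i) (va N j) = 0)
    (hcc : ∀ i j : ZMod N, Pb (vc N i) (vc N j) = 0)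
    (hab0 : ∀ i j : ZMod N, j ≠ i - 1 → j ≠ i → Pb (va N i) (vb N j) = 0)
    (hac0 : ∀ i j : ZMod N, j ≠ i - 2 → j ≠ i → Pb (va N i) (vc N j) = 0)
    (hbb0 : ∀ i j : ZMod N, j ≠ i + 1 → i ≠ j + 1 → Pb (vb N i) (vb N j) = 0)
    (hbc0 : ∀ i j : ZMod N, j ≠ i - 1 → j ≠ i → Pb (vb N i) (vc N j) = 0) :
    ∀ i : ZMod N,
      Pb (xq N i) (xq N (i + 1)) = xq N i * xq N (i + 1) * (xq N i + xq N (i + 1) - 1) ∧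
      Pb (xq N i) (xq N (i + 2)) = xq N i * xq N (i + 1) * xq N (i + 2) := by
  intro i
  exact IsDifferenceOperatorBracket.bracket_xq
    ⟨⟨hanti, hder2⟩, hab1, hab2, hac1, hac2, hbb, hbc1, hbc2, haa, hcc, hab0, hac0, hbb0, hbc0⟩ hN i

/-- Let `{·,·}` be an ℝ-bilinear antisymmetric biderivation on the
field of rational functions in `α_i, β_i, γ_i` (`i ∈ ℤ/N`, `N > 4`) with the given
values on generators (all other pairs of generators bracketing to zero). Then the
cross-ratios `x_i = α_i γ_{i−1}/(β_{i−1} β_i)` satisfy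
`{x_i, x_{i+1}} = x_i x_{i+1}(x_i + x_{i+1} − 1)` and `{x_i, x_{i+2}} = x_i x_{i+1} x_{i+2}`. -/
theorem stmt10 (N : ℕ) (hN : 4 < N) (Pb : RF N → RF N → RF N)
    -- ℝ-bilinearity (additivity and ℝ-homogeneity in the first slot; by
    -- antisymmetry the same holds in the second slot):
    (hadd : ∀ x y z : RF N, Pb (x + y) z = Pb x z + Pb y z)
    (hsmul : ∀ (c : ℝ) (x y : RF N), Pb (cst N c * x) y = cst N c * Pb x y)
    -- antisymmetry:
    (hanti : ∀ x y : RF N, Pb x y = -Pb y x)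
    -- derivation in each argument:
    (hder1 : ∀ x y z : RF N, Pb (x * y) z = x * Pb y z + y * Pb x z)
    (hder2 : ∀ x y z : RF N, Pb x (y * z) = y * Pb x z + z * Pb x y)
    -- values on the generators:
    (hab1 : ∀ i : ZMod N, Pb (va N i) (vb N (i - 1)) = -(cst N (1/2)) * va N i * vb N (i - 1))
    (hab2 : ∀ i : ZMod N, Pb (va N i) (vb N i) = cst N (1/2) * va N i * vb N i)
    (hac1 : ∀ i : ZMod N, Pb (va N i) (vc N (i - 2)) = -(cst N (1/2)) * va N i * vc N (i - 2))
    (hac2 : ∀ i : ZMod N, Pb (va N i) (vc N i) = cst N (1/2) * va N i * vc N i)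
    (hbb : ∀ i : ZMod N, Pb (vb N i) (vb N (i + 1)) = va N (i + 1) * vc N i)
    (hbc1 : ∀ i : ZMod N, Pb (vb N i) (vc N (i - 1)) = -(cst N (1/2)) * vb N i * vc N (i - 1))
    (hbc2 : ∀ i : ZMod N, Pb (vb N i) (vc N i) = cst N (1/2) * vb N i * vc N i)
    -- vanishing on all other pairs of generators:
    (haa : ∀ i j : ZMod N, Pb (va N i) (va N j) = 0)
    (hcc : ∀ i j : ZMod N, Pb (vc N i) (vc N j) = 0)
    (hab0 : ∀ i j : ZMod N, j ≠ i - 1 → j ≠ i → Pb (va N i) (vb N j) = 0)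
    (hac0 : ∀ i j : ZMod N, j ≠ i - 2 → j ≠ i → Pb (va N i) (vc N j) = 0)
    (hbb0 : ∀ i j : ZMod N, j ≠ i + 1 → i ≠ j + 1 → Pb (vb N i) (vb N j) = 0)
    (hbc0 : ∀ i j : ZMod N, j ≠ i - 1 → j ≠ i → Pb (vb N i) (vc N j) = 0) :
    ∀ i : ZMod N,
      Pb (xq N i) (xq N (i + 1)) = xq N i * xq N (i + 1) * (xq N i + xq N (i + 1) - 1) ∧
      Pb (xq N i) (xq N (i + 2)) = xq N i * xq N (i + 1) * xq N (i + 2) :=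
  stmt10_general N hN Pb hanti hder2 hab1 hab2 hac1 hac2 hbb hbc1 hbc2 haa hcc hab0 hac0 hbb0 hbc0
end
end

section
/- Let m ≥ 2, N ≥ 1, G = GL(m, ℝ), H = {h ∈ G : h e₁ = e₁}. For sequences a⁰_s ∈ ℝ \ {0} and 𝐚_s = (a¹_s, …, a^{m−1}_s) ∈ ℝ^{m−1} (s ∈ ℤ/N), let A_s(a) be the m×m matrix whose first m−1 columns are e₂, …, e_m and whose last column is (a⁰_s, a¹_s, …, a^{m−1}_s)ᵀ, so that A_s(a)^{−1} is the block matrix with blocks (−𝐚_s (a⁰_s)^{−1}, I_{m−1}; (a⁰_s)^{−1}, 0). Let F : G^N → ℝ be differentiable, invariant under the right gauge action of H^N (F((h_{s+1} B_s h_s^{−1})_s) = F(B) for all h ∈ H^N), and suppose F((A_s(a)^{−1})_s) = f(a⁰, 𝐚) for a differentiable function f of the variables a^r_s. Then, with gradients ∇_s F, ∇'_s F ∈ gl(m, ℝ) defined by (d/dε)|₀ F(… e^{εξ}B_s …) = tr(∇_s F · ξ) and (d/dε)|₀ F(… B_s e^{εξ} …) = tr(∇'_s F · ξ), at the point B = (A_s(a)^{−1})_s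 one has for every s: (∇'_s F)_{1,1} = −a⁰_s ∂f/∂a⁰_s, (∇'_s F)_{1,i+1} = −a⁰_s ∂f/∂a^i_s for i = 1, …, m−1, (∇_s F)_{m,i} = −∂f/∂a^i_s for i = 1, …, m−1, and (∇_s F)_{m,m} = −a⁰_s ∂f/∂a⁰_s − Σ_{i=1}^{m−1} a^i_s ∂f/∂a^i_s. -/
/-!
Only the directions `ξ = E_{pq}` are needed, since `tr (∇ E_{pq}) = ∇_{qp}`. For the entries in
question, `A(a)⁻¹ ξ` (resp. `ξ A(a)⁻¹`) is supported on the first column, which is the only column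
of `A(a)⁻¹` that depends on `a`. Hence the line `t ↦ A(a)⁻¹ + t • A(a)⁻¹ ξ` is exactly the image of
an explicit curve of invariants: `a⁰ ↦ a⁰ / (1 + t)`, `aⁱ ↦ aⁱ - t a⁰`, `aⁱ ↦ aⁱ - t` or
`a ↦ a / (1 + t)`. As `F (A(a)⁻¹) = f a`, differentiating at `t = 0` along the line and along the
curve expresses `∇_{qp}` as the derivative of `f` in the direction of the curve's velocity.
-/

noncomputable section

/-- `m × m` real matrices, as plain functions (so that the product normed space
structure of `Fin m → Fin m → ℝ` is available). -/
abbrev Mat (m : ℕ) : Type := Fin m → Fin m → ℝ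

/-- Matrix product. -/
def mmul {m : ℕ} (X Y : Mat m) : Mat m := fun i j => ∑ k, X i k * Y k j

/-- Matrix trace. -/
def mtrace {m : ℕ} (X : Mat m) : ℝ := ∑ i, X i i

/-- Identity matrix. -/
def midm (m : ℕ) : Mat m := fun i j => if i = j then 1 else 0

/-- Matrix-vector product. -/
def mvec {m : ℕ} (X : Mat m) (v : Fin m → ℝ) : Fin m → ℝ := fun i => ∑ j, X i j * v j

/-- The first standard basis vector `e₁` of `ℝ^m`. -/
def e1vec (m : ℕ) : Fin m → ℝ := fun i => if (i : ℕ) = 0 then 1 else 0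

/-- The companion-type matrix `A(a)` whose first `m−1` columns are `e₂, …, e_m` and whose
last column is `(a⁰, a¹, …, a^{m−1})ᵀ`. -/
def Amat {m : ℕ} (a : Fin m → ℝ) : Mat m := fun i j =>
  if (j : ℕ) = m - 1 then a i else if (i : ℕ) = (j : ℕ) + 1 then 1 else 0

/-- The inverse `A(a)⁻¹`, given in block form by `(−𝐚 (a⁰)⁻¹, I_{m−1}; (a⁰)⁻¹, 0)`. -/
def AmatInv {m : ℕ} (a : Fin m → ℝ) : Mat m := fun i j =>
  if h : (i : ℕ) + 1 < m then
    (if (j : ℕ) = 0 then -a ⟨(i : ℕ) + 1, h⟩ / a ⟨0, by omega⟩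
     else if (j : ℕ) = (i : ℕ) + 1 then 1 else 0)
  else (if (j : ℕ) = 0 then (a ⟨0, i.pos⟩)⁻¹ else 0)

open Matrix Filter Topology

theorem fderiv_apply_eq_of_eventually_comp_eq {𝕜 E G W : Type*} [NontriviallyNormedField 𝕜]
    [NormedAddCommGroup E] [NormedSpace 𝕜 E] [NormedAddCommGroup G] [NormedSpace 𝕜 G]
    [NormedAddCommGroup W] [NormedSpace 𝕜 W] {f : E → W} {F : G → W} {γ : 𝕜 → E} {δ : E}
    {x V : G} (hf : DifferentiableAt 𝕜 f (γ 0)) (hF : DifferentiableAt 𝕜 F x)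
    (hγ : HasDerivAt γ δ 0) (h : ∀ᶠ t in 𝓝 0, f (γ t) = F (x + t • V)) :
    fderiv 𝕜 f (γ 0) δ = fderiv 𝕜 F x V := by
  have hline : HasDerivAt (fun t : 𝕜 => x + t • V) V 0 := by
    simpa using ((hasDerivAt_id (0 : 𝕜)).smul_const V).const_add x
  have hFline : HasDerivAt (fun t : 𝕜 => F (x + t • V)) (fderiv 𝕜 F x V) 0 := by
    refine HasFDerivAt.comp_hasDerivAt (f := fun t : 𝕜 => x + t • V) 0 ?_ hline
    simpa using hF.hasFDerivAt
  exact (hf.hasFDerivAt.comp_hasDerivAt 0 hγ).unique (hFline.congr_of_eventuallyEq h)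

lemma hasDerivAt_one_add_inv : HasDerivAt (fun t : ℝ => (1 + t)⁻¹) (-1) 0 := by
  have h := ((hasDerivAt_id' (0 : ℝ)).const_add 1).inv (by norm_num)
  norm_num at h
  exact h

lemma eventually_one_add_ne_zero : ∀ᶠ t : ℝ in 𝓝 0, 1 + t ≠ 0 := by
  filter_upwards [Ioi_mem_nhds (show (-1 : ℝ) < 0 by norm_num)] with t ht
  exact ne_of_gt (by linarith [Set.mem_Ioi.1 ht])

lemma Fin.mk_eq_iff_val_eq {n k : ℕ} {hk : k < n} {a : Fin n} :
    (⟨k, hk⟩ : Fin n) = a ↔ (a : ℕ) = k := by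
  rw [eq_comm, Fin.eq_mk_iff_val_eq]

section Matrices

variable {m : ℕ}

lemma mmul_eq_mul (X Y : Mat m) : mmul X Y = (of X * of Y : Matrix (Fin m) (Fin m) ℝ) := rfl

lemma midm_eq_one : midm m = (1 : Matrix (Fin m) (Fin m) ℝ) := by
  ext i j
  simp [midm, Matrix.one_apply]

lemma mmul_eq_midm_comm {X Y : Mat m} : mmul X Y = midm m ↔ mmul Y X = midm m := by
  rw [mmul_eq_mul, mmul_eq_mul, midm_eq_one]
  exact mul_eq_one_comm (M := Matrix (Fin m) (Fin m) ℝ)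

def elemMat (p q : Fin m) : Mat m := fun i j => if i = p ∧ j = q then 1 else 0

lemma mmul_elemMat_apply (X : Mat m) (p q i j : Fin m) :
    mmul X (elemMat p q) i j = if j = q then X i p else 0 := by
  simp [mmul, elemMat, ite_and, eq_comm]

lemma elemMat_mmul_apply (X : Mat m) (p q i j : Fin m) :
    mmul (elemMat p q) X i j = if i = p then X q j else 0 := by
  simp [mmul, elemMat, ite_and, eq_comm]

lemma mtrace_mmul_elemMat (X : Mat m) (p q : Fin m) :
    mtrace (mmul X (elemMat p q)) = X q p := by
  simp [mtrace, mmul, elemMat, ite_and]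

end Matrices

section Companion

variable {m : ℕ} [NeZero m]

lemma AmatInv_apply_zero (b : Fin m → ℝ) (i : Fin m) :
    AmatInv b i 0 = if h : (i : ℕ) + 1 < m then -b ⟨i + 1, h⟩ / b 0 else (b 0)⁻¹ := by
  simp only [AmatInv, Fin.val_zero, ↓reduceIte]
  rfl

lemma AmatInv_apply_of_ne_zero (b : Fin m → ℝ) {i j : Fin m} (hj : j ≠ 0) :
    AmatInv b i j = if (j : ℕ) = i + 1 then 1 else 0 := by
  rw [Ne, Fin.ext_iff, Fin.val_zero] at hj
  unfold AmatInv
  split_ifs <;> first | rfl | omega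

lemma mmul_Amat_AmatInv (b : Fin m → ℝ) (hb : b 0 ≠ 0) :
    mmul (Amat b) (AmatInv b) = midm m := by
  obtain ⟨n, rfl⟩ : ∃ n, m = n + 1 := ⟨m - 1, by have := NeZero.pos m; omega⟩
  funext i j
  have hA : ∀ k : Fin n, Amat b i k.castSucc = if (i : ℕ) = k + 1 then 1 else 0 := fun k => by
    simp only [Amat, Fin.val_castSucc]
    rw [if_neg (by omega)]
  have hlast : Amat b i (Fin.last n) = b i := by simp [Amat]
  simp only [mmul, Fin.sum_univ_castSucc, hA, hlast, ite_mul, one_mul, zero_mul]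
  rcases Fin.eq_zero_or_eq_succ i with rfl | ⟨i, rfl⟩
  · rcases eq_or_ne j 0 with rfl | hj
    · simp [AmatInv_apply_zero, midm, hb]
    · simp [AmatInv_apply_of_ne_zero _ hj, midm, hj.symm, j.isLt.ne]
  · simp only [Fin.val_succ, add_left_inj, Fin.val_inj, Finset.sum_ite_eq, Finset.mem_univ,
      if_true]
    rcases eq_or_ne j 0 with rfl | hj
    · simp [AmatInv_apply_zero, midm, Fin.succ_ne_zero]
      change -b i.succ / b 0 + b i.succ * (b 0)⁻¹ = 0
      ring
    · simp [AmatInv_apply_of_ne_zero _ hj, midm, Fin.ext_iff, j.isLt.ne, eq_comm]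

lemma mmul_AmatInv_Amat (b : Fin m → ℝ) (hb : b 0 ≠ 0) :
    mmul (AmatInv b) (Amat b) = midm m :=
  mmul_eq_midm_comm.1 (mmul_Amat_AmatInv b hb)

lemma AmatInv_eq_add_of_apply_zero {b c : Fin m → ℝ} {M : Mat m} (hM : ∀ i j, j ≠ 0 → M i j = 0)
    (h0 : ∀ i, AmatInv c i 0 = AmatInv b i 0 + M i 0) : AmatInv c = AmatInv b + M := by
  funext i j
  rcases eq_or_ne j 0 with rfl | hj
  · exact h0 i
  · rw [Pi.add_apply, Pi.add_apply, hM i j hj, AmatInv_apply_of_ne_zero _ hj,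
      AmatInv_apply_of_ne_zero _ hj, add_zero]

lemma AmatInv_update_zero_mul_inv (b : Fin m → ℝ) (hb : b 0 ≠ 0) {t : ℝ} (ht : 1 + t ≠ 0) :
    AmatInv (Function.update b 0 (b 0 * (1 + t)⁻¹)) =
      AmatInv b + t • mmul (AmatInv b) (elemMat 0 0) := by
  refine AmatInv_eq_add_of_apply_zero (fun _ j hj => by simp [mmul_elemMat_apply, hj])
    fun i => ?_
  simp only [AmatInv_apply_zero, Pi.smul_apply, mmul_elemMat_apply, if_true, smul_eq_mul]
  split_ifs
  · simp only [Function.update_self, ne_eq, Fin.mk_eq_zero, Nat.add_one_ne_zero,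
      not_false_eq_true, Function.update_of_ne]
    field_simp
    ring
  · simp only [Function.update_self]
    field_simp

lemma AmatInv_smul_one_add_inv (b : Fin m → ℝ) (hb : b 0 ≠ 0) {t : ℝ} (ht : 1 + t ≠ 0) :
    AmatInv ((1 + t)⁻¹ • b) =
      AmatInv b + t • mmul (elemMat ⟨m - 1, Nat.sub_one_lt (NeZero.ne m)⟩
        ⟨m - 1, Nat.sub_one_lt (NeZero.ne m)⟩) (AmatInv b) := by
  refine AmatInv_eq_add_of_apply_zero (fun k j hj => ?_) fun k => ?_
  · simp [elemMat_mmul_apply, AmatInv_apply_of_ne_zero _ hj,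
      show (j : ℕ) ≠ m - 1 + 1 by have := j.isLt; omega]
  simp only [AmatInv_apply_zero, Pi.smul_apply, elemMat_mmul_apply, smul_eq_mul,
    Fin.eq_mk_iff_val_eq]
  split_ifs <;> (try simp only [mul_zero]) <;> first | omega | (field_simp <;> ring)

lemma AmatInv_add_smul_single_of_ne_zero (b : Fin m → ℝ) (hb : b 0 ≠ 0) {i : Fin m} (hi : i ≠ 0)
    (t : ℝ) :
    AmatInv (b + t • Pi.single i (-b 0)) = AmatInv b + t • mmul (AmatInv b) (elemMat i 0) := by
  refine AmatInv_eq_add_of_apply_zero (fun _ j hj => by simp [mmul_elemMat_apply, hj])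
    fun k => ?_
  have := i.isLt
  simp only [AmatInv_apply_zero, Pi.smul_apply, mmul_elemMat_apply, if_true, smul_eq_mul,
    AmatInv_apply_of_ne_zero _ hi, Pi.add_apply, Pi.single_apply, hi.symm, if_false,
    Fin.mk_eq_iff_val_eq, mul_zero, add_zero]
  split_ifs <;> first | omega | (field_simp; ring)

lemma AmatInv_add_smul_single_neg_one (b : Fin m → ℝ) (hb : b 0 ≠ 0) {i : ℕ} (h1 : 1 ≤ i)
    (h2 : i ≤ m - 1) (t : ℝ) :
    AmatInv (b + t • Pi.single ⟨i, by omega⟩ (-1)) =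
      AmatInv b + t • mmul (elemMat ⟨i - 1, by omega⟩ ⟨m - 1, by omega⟩) (AmatInv b) := by
  refine AmatInv_eq_add_of_apply_zero (fun k j hj => ?_) fun k => ?_
  · simp [elemMat_mmul_apply, AmatInv_apply_of_ne_zero _ hj,
      show (j : ℕ) ≠ m - 1 + 1 by have := j.isLt; omega]
  simp only [AmatInv_apply_zero, Pi.smul_apply, elemMat_mmul_apply, smul_eq_mul,
    Pi.add_apply, Pi.single_apply, Fin.eq_mk_iff_val_eq, Fin.val_zero]
  split_ifs <;> (try simp only [mul_zero, add_zero, mul_neg, mul_one]) <;>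
    first | omega | (field_simp; ring)

end Companion

section Lifts

variable {m : ℕ} [NeZero m]

def HasLineLift (b w : Fin m → ℝ) (M : Mat m) : Prop :=
  ∃ c : ℝ → Fin m → ℝ, c 0 = b ∧ HasDerivAt c w 0 ∧
    ∀ᶠ t in 𝓝 0, c t 0 ≠ 0 ∧ AmatInv (c t) = AmatInv b + t • M

lemma hasLineLift_of_add_smul {b v : Fin m → ℝ} {M : Mat m} (hb : b 0 ≠ 0) (hv : v 0 = 0)
    (h : ∀ t : ℝ, AmatInv (b + t • v) = AmatInv b + t • M) : HasLineLift b v M := by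
  refine ⟨fun t => b + t • v, by simp, ?_, Eventually.of_forall fun t => ⟨?_, h t⟩⟩
  · simpa using ((hasDerivAt_id (0 : ℝ)).smul_const v).const_add b
  · simpa [hv] using hb

lemma hasLineLift_mmul_elemMat_zero_zero (b : Fin m → ℝ) (hb : b 0 ≠ 0) :
    HasLineLift b (Pi.single 0 (-b 0)) (mmul (AmatInv b) (elemMat 0 0)) := by
  refine ⟨fun t => Function.update b 0 (b 0 * (1 + t)⁻¹), by simp, ?_, ?_⟩
  · refine hasDerivAt_pi.2 fun r => ?_
    rcases eq_or_ne r 0 with rfl | hr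
    · simpa using hasDerivAt_one_add_inv.const_mul (b 0)
    · simpa [hr] using hasDerivAt_const (0 : ℝ) (b r)
  · filter_upwards [eventually_one_add_ne_zero] with t ht
    exact ⟨by simp [hb, ht], AmatInv_update_zero_mul_inv b hb ht⟩

lemma hasLineLift_mmul_elemMat_ne_zero (b : Fin m → ℝ) (hb : b 0 ≠ 0) {i : Fin m}
    (hi : i ≠ 0) :
    HasLineLift b (Pi.single i (-b 0)) (mmul (AmatInv b) (elemMat i 0)) :=
  hasLineLift_of_add_smul hb (by simp [hi.symm]) (AmatInv_add_smul_single_of_ne_zero b hb hi)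

lemma hasLineLift_elemMat_mmul (b : Fin m → ℝ) (hb : b 0 ≠ 0) {i : ℕ} (h1 : 1 ≤ i)
    (h2 : i ≤ m - 1) :
    HasLineLift b (Pi.single ⟨i, by omega⟩ (-1))
      (mmul (elemMat ⟨i - 1, by omega⟩ ⟨m - 1, by omega⟩) (AmatInv b)) :=
  hasLineLift_of_add_smul hb (by simp [Pi.single_apply, Fin.ext_iff]; omega)
    (AmatInv_add_smul_single_neg_one b hb h1 h2)

lemma hasLineLift_elemMat_last_mmul (b : Fin m → ℝ) (hb : b 0 ≠ 0) :
    HasLineLift b (-b) (mmul (elemMat ⟨m - 1, Nat.sub_one_lt (NeZero.ne m)⟩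
      ⟨m - 1, Nat.sub_one_lt (NeZero.ne m)⟩) (AmatInv b)) := by
  refine ⟨fun t => (1 + t)⁻¹ • b, by simp, ?_, ?_⟩
  · simpa using hasDerivAt_one_add_inv.smul_const b
  · filter_upwards [eventually_one_add_ne_zero] with t ht
    exact ⟨by simp [hb, ht], AmatInv_smul_one_add_inv b hb ht⟩

end Lifts

lemma fderiv_pi_single_eq_sum_of_hasLineLift {m N : ℕ} [NeZero m] [NeZero N]
    {F : (ZMod N → Mat m) → ℝ} {f : (Fin m × ZMod N → ℝ) → ℝ} {a : Fin m × ZMod N → ℝ}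
    (hF : DifferentiableAt ℝ F fun t => AmatInv fun r => a (r, t)) (hf : DifferentiableAt ℝ f a)
    (hFf : ∀ b : Fin m × ZMod N → ℝ, (∀ s, b (0, s) ≠ 0) →
      F (fun s => AmatInv fun r => b (r, s)) = f b)
    (ha : ∀ s, a (0, s) ≠ 0) {s : ZMod N} {w : Fin m → ℝ} {M : Mat m}
    (hlift : HasLineLift (fun r => a (r, s)) w M) :
    fderiv ℝ F (fun t => AmatInv fun r => a (r, t)) (Pi.single s M) =
      ∑ r, w r * fderiv ℝ f a (Pi.single (r, s) 1) := by
  obtain ⟨c, hc0, hc, hcM⟩ := hlift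
  set γ : ℝ → Fin m × ZMod N → ℝ := fun t p => if p.2 = s then c t p.1 else a p
  have hγ0 : γ 0 = a := by
    funext ⟨r, t⟩
    simp only [γ, hc0]
    split_ifs with h <;> simp [h]
  have hγ : HasDerivAt γ (fun p => if p.2 = s then w p.1 else 0) 0 := by
    refine hasDerivAt_pi.2 fun p => ?_
    by_cases h : p.2 = s
    · simpa [γ, h] using hasDerivAt_pi.1 hc p.1
    · simpa [γ, h] using hasDerivAt_const (0 : ℝ) (a p)
  have hδ : (fun p : Fin m × ZMod N => if p.2 = s then w p.1 else 0) =
      ∑ r, w r • Pi.single (r, s) (1 : ℝ) := by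
    funext ⟨r, t⟩
    by_cases h : t = s <;> simp [Finset.sum_apply, Pi.single_apply, h]
  have hcurve : ∀ᶠ t in 𝓝 0, f (γ t) =
      F ((fun t => AmatInv fun r => a (r, t)) + t • (Pi.single s M : ZMod N → Mat m)) := by
    filter_upwards [hcM] with t ⟨hct, hcM⟩
    rw [← hFf (γ t) fun s' => ?_]
    · congr 1
      funext s'
      by_cases h : s' = s
      · subst h
        simp [γ, hcM]
      · simp [γ, h]
    · by_cases h : s' = s
      · subst h
        simpa [γ] using hct
      · simpa [γ, h] using ha s'
  rw [← fderiv_apply_eq_of_eventually_comp_eq (hγ0 ▸ hf) hF hγ hcurve, hγ0, hδ, map_sum]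
  simp [smul_eq_mul]

/-- The gradients of a gauge-invariant extension `F` of a function
`f` of the invariants `a^r_s`, computed at the point `B = (A_s(a)^{−1})_s`. -/
theorem stmt13 (m N : ℕ) [NeZero m] [NeZero N] (hm : 2 ≤ m)
    (F : (ZMod N → Mat m) → ℝ) (hF : Differentiable ℝ F)
    (f : ((Fin m × ZMod N) → ℝ) → ℝ) (hf : Differentiable ℝ f)
    (hFf : ∀ a : Fin m × ZMod N → ℝ, (∀ s, a (0, s) ≠ 0) →
      F (fun s => AmatInv (fun r => a (r, s))) = f a)
    (a : Fin m × ZMod N → ℝ) (ha : ∀ s, a (0, s) ≠ 0)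
    (gradL gradR : ZMod N → Mat m)
    (hgradL : ∀ (s : ZMod N) (ξ : Mat m),
      fderiv ℝ F (fun t => AmatInv (fun r => a (r, t)))
          (Pi.single s (mmul ξ (AmatInv (fun r => a (r, s)))))
        = mtrace (mmul (gradL s) ξ))
    (hgradR : ∀ (s : ZMod N) (ξ : Mat m),
      fderiv ℝ F (fun t => AmatInv (fun r => a (r, t)))
          (Pi.single s (mmul (AmatInv (fun r => a (r, s))) ξ))
        = mtrace (mmul (gradR s) ξ)) :
    -- `A(a)⁻¹` really is the inverse of the companion matrix `A(a)`:
    (∀ s : ZMod N, mmul (Amat (fun r => a (r, s))) (AmatInv (fun r => a (r, s))) = midm m ∧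
        mmul (AmatInv (fun r => a (r, s))) (Amat (fun r => a (r, s))) = midm m) ∧
    -- `(∇'_s F)_{1,1} = −a⁰_s ∂f/∂a⁰_s`:
    (∀ s : ZMod N, gradR s 0 0 = -(a (0, s)) * fderiv ℝ f a (Pi.single (0, s) 1)) ∧
    -- `(∇'_s F)_{1,i+1} = −a⁰_s ∂f/∂a^i_s` for `i = 1, …, m−1`:
    (∀ (s : ZMod N) (i : Fin m), i ≠ 0 →
      gradR s 0 i = -(a (0, s)) * fderiv ℝ f a (Pi.single (i, s) 1)) ∧
    -- `(∇_s F)_{m,i} = −∂f/∂a^i_s` for `i = 1, …, m−1`: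
    (∀ (s : ZMod N) (i : ℕ) (h1 : 1 ≤ i) (h2 : i ≤ m - 1),
      gradL s ⟨m - 1, by omega⟩ ⟨i - 1, by omega⟩
        = -fderiv ℝ f a (Pi.single ((⟨i, by omega⟩ : Fin m), s) 1)) ∧
    -- `(∇_s F)_{m,m} = −a⁰_s ∂f/∂a⁰_s − Σ_{i=1}^{m−1} a^i_s ∂f/∂a^i_s`:
    (∀ s : ZMod N, gradL s ⟨m - 1, by omega⟩ ⟨m - 1, by omega⟩
        = -(a (0, s)) * fderiv ℝ f a (Pi.single (0, s) 1)
          - ∑ i ∈ Finset.univ.erase (0 : Fin m), a (i, s) * fderiv ℝ f a (Pi.single (i, s) 1)) := by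
  have grad := fun s w M (h : HasLineLift _ w M) =>
    fderiv_pi_single_eq_sum_of_hasLineLift (hF _) (hf a) hFf ha (s := s) h
  refine ⟨fun s => ⟨mmul_Amat_AmatInv _ (ha s), mmul_AmatInv_Amat _ (ha s)⟩,
    fun s => ?_, fun s i hi => ?_, fun s i h1 h2 => ?_, fun s => ?_⟩
  · rw [← mtrace_mmul_elemMat (gradR s), ← hgradR,
      grad s _ _ (hasLineLift_mmul_elemMat_zero_zero _ (ha s))]
    simp [Pi.single_apply]
  · rw [← mtrace_mmul_elemMat (gradR s), ← hgradR,
      grad s _ _ (hasLineLift_mmul_elemMat_ne_zero _ (ha s) hi)]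
    simp [Pi.single_apply]
  · rw [← mtrace_mmul_elemMat (gradL s), ← hgradL,
      grad s _ _ (hasLineLift_elemMat_mmul _ (ha s) h1 h2)]
    simp [Pi.single_apply]
  · rw [← mtrace_mmul_elemMat (gradL s), ← hgradL,
      grad s _ _ (hasLineLift_elemMat_last_mmul _ (ha s)),
      ← Finset.add_sum_erase _ _ (Finset.mem_univ 0)]
    simp [Finset.sum_neg_distrib]
    ring
end
end

section
/- Let m ≥ 1 and let a⁰, …, a^{m−1} and c⁰, …, c^{m−1} be bi-infinite real sequences. In the algebra of difference operators set D := Σ_{r=0}^{m−1} a^r 𝒯^r − 𝒯^m and E := Σ_{r=0}^{m−1} (𝒯^{−r} + 𝒯^{−m} ∘ a^r) ∘ c^r. Then 2·r(E·D) = −Σ_{r=0}^{m−1} Σ_{k=0}^{m−1} 𝒯^{−m} ∘ (a^r a^k c^r) ∘ 𝒯^k − Σ_{r=1}^{m−1} Σ_{k=0}^{r−1} 𝒯^{−r} ∘ (a^k c^r) ∘ 𝒯^k + Σ_{r=0}^{m−1} Σ_{k=r+1}^{m−1} 𝒯^{−r} ∘ (a^k c^r) ∘ 𝒯^k − Σ_{r=0}^{m−1}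 𝒯^{−r} ∘ c^r ∘ 𝒯^m, where products of sequences are termwise. -/
noncomputable section

/-- The operator `D = Σ_{r=0}^{m−1} a^r 𝒯^r − 𝒯^m`. -/
def Dof (m : ℕ) (a : ℕ → ℤ → ℝ) : DOp :=
  (∑ r ∈ Finset.range m, DOp.singleOp (r : ℤ) (a r)) - DOp.Tpow (m : ℤ)

/-- The operator `E = Σ_{r=0}^{m−1} (𝒯^{−r} + 𝒯^{−m} ∘ a^r) ∘ c^r`. -/
def Eof (m : ℕ) (a c : ℕ → ℤ → ℝ) : DOp :=
  ∑ r ∈ Finset.range m,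
    DOp.mul (DOp.Tpow (-(r : ℤ)) + DOp.mul (DOp.Tpow (-(m : ℤ))) (DOp.singleOp 0 (a r)))
      (DOp.singleOp 0 (c r))

/-!
Every operator involved is a finite sum of monomials `e ∘ 𝒯^p` (`singleOp p e`), which multiply
by `(e ∘ 𝒯^p)(d ∘ 𝒯^q) = (e · 𝒯^p d) ∘ 𝒯^{p+q}`, and `2 r` multiplies a monomial by the sign of
its order. In `E·D` the terms `𝒯^{-r} c^r a^k 𝒯^k` have order `k - r`, so their sum over `k`
splits at `k = r`; the terms `𝒯^{-m} a^r c^r a^k 𝒯^k` have negative order, `-𝒯^{-r} c^r 𝒯^m`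
positive order, and `-𝒯^{-m} a^r c^r 𝒯^m` order zero, so it drops out.
-/

namespace DOp

theorem singleOp_mul (p : ℤ) (e : ℤ → ℝ) (b : DOp) :
    mul (singleOp p e) b = fun n j => e j * b (n - p) (j + p) := by
  funext n j
  rw [mul, finsum_eq_single _ p fun i hi => by simp [singleOp, hi]]
  simp [singleOp]

theorem singleOp_mul_singleOp (p q : ℤ) (e d : ℤ → ℝ) :
    mul (singleOp p e) (singleOp q d) = singleOp (p + q) fun j => e j * d (j + p) := by
  funext n j
  simp only [singleOp_mul, singleOp, sub_eq_iff_eq_add']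
  split_ifs <;> simp

theorem singleOp_mul_sub (p : ℤ) (e : ℤ → ℝ) (x y : DOp) :
    mul (singleOp p e) (x - y) = mul (singleOp p e) x - mul (singleOp p e) y := by
  simp only [singleOp_mul]
  funext n j
  simp [mul_sub]

theorem singleOp_mul_sum {ι : Type*} (p : ℤ) (e : ℤ → ℝ) (s : Finset ι) (f : ι → DOp) :
    mul (singleOp p e) (∑ i ∈ s, f i) = ∑ i ∈ s, mul (singleOp p e) (f i) := by
  simp only [singleOp_mul]
  funext n j
  simp [Finset.sum_apply, Finset.mul_sum]

theorem hasFiniteSupport_singleOp (p : ℤ) (e : ℤ → ℝ) :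
    Function.HasFiniteSupport (singleOp p e) :=
  (Set.finite_singleton p).subset fun i hi => by
    by_contra h
    exact hi (funext fun j => if_neg h)

theorem hasFiniteSupport_mul_apply {x : DOp} (hx : Function.HasFiniteSupport x) (z : DOp)
    (n j : ℤ) : Function.HasFiniteSupport fun i => x i j * z (n - i) (j + i) :=
  hx.subset fun i hi h => hi (by simp [h])

protected theorem add_mul {x y : DOp} (hx : Function.HasFiniteSupport x)
    (hy : Function.HasFiniteSupport y) (z : DOp) : mul (x + y) z = mul x z + mul y z := by
  funext n j
  simp only [mul, Pi.add_apply, _root_.add_mul]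
  exact finsum_add_distrib (hasFiniteSupport_mul_apply hx z n j)
    (hasFiniteSupport_mul_apply hy z n j)

protected theorem sum_mul {ι : Type*} (s : Finset ι) {f : ι → DOp}
    (hf : ∀ i ∈ s, Function.HasFiniteSupport (f i)) (z : DOp) :
    mul (∑ i ∈ s, f i) z = ∑ i ∈ s, mul (f i) z := by
  funext n j
  simp only [mul, Finset.sum_apply, Finset.sum_mul]
  exact finsum_sum_comm s _ fun i hi => hasFiniteSupport_mul_apply (hf i hi) z n j

theorem Tpow_mul_singleOp_mul_Tpow (p k : ℤ) (f : ℤ → ℝ) :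
    mul (Tpow p) (mul (singleOp 0 f) (Tpow k)) = singleOp (p + k) fun j => f (j + p) := by
  simp only [Tpow, singleOp_mul_singleOp, zero_add, mul_one, one_mul]

def rmatLinear : DOp →ₗ[ℝ] DOp where
  toFun := rmat
  map_add' x y := by
    funext n j
    simp only [rmat, Pi.add_apply]
    split_ifs <;> ring
  map_smul' c x := by
    funext n j
    simp only [rmat, Pi.smul_apply, smul_eq_mul, RingHom.id_apply]
    split_ifs <;> ring

theorem rmat_add (x y : DOp) : rmat (x + y) = rmat x + rmat y := map_add rmatLinear x y

theorem rmat_sub (x y : DOp) : rmat (x - y) = rmat x - rmat y := map_sub rmatLinear x y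

theorem rmat_sum {ι : Type*} (s : Finset ι) (f : ι → DOp) :
    rmat (∑ i ∈ s, f i) = ∑ i ∈ s, rmat (f i) := map_sum rmatLinear f s

theorem two_smul_rmat_singleOp_of_pos {p : ℤ} (hp : 0 < p) (e : ℤ → ℝ) :
    (2 : ℝ) • rmat (singleOp p e) = singleOp p e := by
  funext n j
  simp only [rmat, singleOp, Pi.smul_apply, smul_eq_mul]
  split_ifs <;> first | (exfalso; omega) | ring

theorem two_smul_rmat_singleOp_of_neg {p : ℤ} (hp : p < 0) (e : ℤ → ℝ) :
    (2 : ℝ) • rmat (singleOp p e) = -singleOp p e := by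
  funext n j
  simp only [rmat, singleOp, Pi.smul_apply, Pi.neg_apply, smul_eq_mul]
  split_ifs <;> first | (exfalso; omega) | ring

theorem rmat_singleOp_zero (e : ℤ → ℝ) : rmat (singleOp 0 e) = 0 := by
  funext n j
  simp only [rmat, singleOp, Pi.zero_apply]
  split_ifs <;> first | (exfalso; omega) | simp

end DOp

open DOp

theorem Eof_eq_sum_singleOp (m : ℕ) (a c : ℕ → ℤ → ℝ) :
    Eof m a c = ∑ r ∈ Finset.range m,
      (singleOp (-r) (fun j => c r (j + -r))
        + singleOp (-m) fun j => a r (j + -m) * c r (j + -m)) := by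
  refine Finset.sum_congr rfl fun r _ => ?_
  rw [Tpow, Tpow, singleOp_mul_singleOp,
    DOp.add_mul (hasFiniteSupport_singleOp _ _) (hasFiniteSupport_singleOp _ _),
    singleOp_mul_singleOp, singleOp_mul_singleOp]
  simp only [add_zero, one_mul]

theorem singleOp_mul_Dof (p : ℤ) (e : ℤ → ℝ) (m : ℕ) (a : ℕ → ℤ → ℝ) :
    mul (singleOp p e) (Dof m a)
      = (∑ k ∈ Finset.range m, singleOp (p + k) fun j => a k (j + p) * e j)
        - singleOp (p + m) e := by
  rw [Dof, singleOp_mul_sub, singleOp_mul_sum, Tpow, singleOp_mul_singleOp]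
  simp only [singleOp_mul_singleOp, mul_one, mul_comm (e _) (a _ _)]

theorem two_smul_rmat_singleOp_neg_mul_Dof {r m : ℕ} (hr : r < m) (e : ℤ → ℝ)
    (a : ℕ → ℤ → ℝ) :
    (2 : ℝ) • rmat (mul (singleOp (-r) e) (Dof m a))
      = -(∑ k ∈ Finset.range r, singleOp (-r + k) fun j => a k (j + -r) * e j)
        + (∑ k ∈ Finset.Ico (r + 1) m, singleOp (-r + k) fun j => a k (j + -r) * e j)
        - singleOp (-r + m) e := by
  rw [singleOp_mul_Dof, rmat_sub, rmat_sum, smul_sub, Finset.smul_sum,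
    ← Finset.sum_range_add_sum_Ico _ hr, Finset.sum_range_succ, neg_add_cancel,
    rmat_singleOp_zero, smul_zero, add_zero, two_smul_rmat_singleOp_of_pos (by omega),
    Finset.sum_congr rfl fun k hk => two_smul_rmat_singleOp_of_neg
      (by simp only [Finset.mem_range] at hk; omega) _,
    Finset.sum_congr rfl fun k hk => two_smul_rmat_singleOp_of_pos
      (by simp only [Finset.mem_Ico] at hk; omega) _,
    Finset.sum_neg_distrib]

theorem two_smul_rmat_singleOp_neg_self_mul_Dof (m : ℕ) (e : ℤ → ℝ) (a : ℕ → ℤ → ℝ) :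
    (2 : ℝ) • rmat (mul (singleOp (-m) e) (Dof m a))
      = -∑ k ∈ Finset.range m, singleOp (-m + k) fun j => a k (j + -m) * e j := by
  rw [singleOp_mul_Dof, rmat_sub, rmat_sum, smul_sub, Finset.smul_sum, neg_add_cancel,
    rmat_singleOp_zero, smul_zero, sub_zero, ← Finset.sum_neg_distrib]
  exact Finset.sum_congr rfl fun k hk => two_smul_rmat_singleOp_of_neg
    (by simp only [Finset.mem_range] at hk; omega) _

theorem two_smul_rmat_Eof_mul_Dof (m : ℕ) (a c : ℕ → ℤ → ℝ) :
    (2 : ℝ) • rmat (mul (Eof m a c) (Dof m a)) = ∑ r ∈ Finset.range m,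
      (-(∑ k ∈ Finset.range r, singleOp (-r + k) fun j => a k (j + -r) * c r (j + -r))
        + (∑ k ∈ Finset.Ico (r + 1) m, singleOp (-r + k) fun j => a k (j + -r) * c r (j + -r))
        - (singleOp (-r + m) fun j => c r (j + -r))
        - ∑ k ∈ Finset.range m,
            singleOp (-m + k) fun j => a k (j + -m) * (a r (j + -m) * c r (j + -m))) := by
  have hfin := hasFiniteSupport_singleOp
  rw [Eof_eq_sum_singleOp, DOp.sum_mul _ fun r _ => (hfin _ _).add (hfin _ _), rmat_sum,
    Finset.smul_sum]
  refine Finset.sum_congr rfl fun r hr => ?_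
  rw [DOp.add_mul (hfin _ _) (hfin _ _), rmat_add, smul_add,
    two_smul_rmat_singleOp_neg_mul_Dof (Finset.mem_range.mp hr),
    two_smul_rmat_singleOp_neg_self_mul_Dof, ← sub_eq_add_neg]

theorem sum_Ico_one_sum_range {M : Type*} [AddCommMonoid M] (m : ℕ) (g : ℕ → ℕ → M) :
    ∑ r ∈ Finset.Ico 1 m, ∑ k ∈ Finset.range r, g r k
      = ∑ r ∈ Finset.range m, ∑ k ∈ Finset.range r, g r k :=
  Finset.sum_subset (fun r hr => Finset.mem_range.mpr (Finset.mem_Ico.mp hr).2)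
    fun r _ hr => by
      obtain rfl : r = 0 := by simp_all
      simp

theorem stmt14_general (m : ℕ) (a c : ℕ → ℤ → ℝ) :
    (2 : ℝ) • DOp.rmat (DOp.mul (Eof m a c) (Dof m a))
      = -(∑ r ∈ Finset.range m, ∑ k ∈ Finset.range m,
            DOp.mul (DOp.Tpow (-(m : ℤ)))
              (DOp.mul (DOp.singleOp 0 fun j => a r j * a k j * c r j) (DOp.Tpow (k : ℤ))))
        - (∑ r ∈ Finset.Ico 1 m, ∑ k ∈ Finset.range r,
            DOp.mul (DOp.Tpow (-(r : ℤ)))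
              (DOp.mul (DOp.singleOp 0 fun j => a k j * c r j) (DOp.Tpow (k : ℤ))))
        + (∑ r ∈ Finset.range m, ∑ k ∈ Finset.Ico (r + 1) m,
            DOp.mul (DOp.Tpow (-(r : ℤ)))
              (DOp.mul (DOp.singleOp 0 fun j => a k j * c r j) (DOp.Tpow (k : ℤ))))
        - (∑ r ∈ Finset.range m,
            DOp.mul (DOp.Tpow (-(r : ℤ)))
              (DOp.mul (DOp.singleOp 0 (c r)) (DOp.Tpow (m : ℤ)))) := by
  rw [two_smul_rmat_Eof_mul_Dof, sum_Ico_one_sum_range]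
  simp only [Tpow_mul_singleOp_mul_Tpow, mul_left_comm (a _ _) (a _ _), mul_assoc,
    Finset.sum_add_distrib, Finset.sum_sub_distrib, Finset.sum_neg_distrib]
  abel

/-- The explicit expansion of `2·r(E·D)` where
`D = Σ_{r<m} a^r 𝒯^r − 𝒯^m` and `E = Σ_{r<m} (𝒯^{−r} + 𝒯^{−m}∘a^r)∘c^r`. -/
theorem stmt14 (m : ℕ) (hm : 1 ≤ m) (a c : ℕ → ℤ → ℝ) :
    (2 : ℝ) • DOp.rmat (DOp.mul (Eof m a c) (Dof m a))
      = -(∑ r ∈ Finset.range m, ∑ k ∈ Finset.range m,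
            DOp.mul (DOp.Tpow (-(m : ℤ)))
              (DOp.mul (DOp.singleOp 0 fun j => a r j * a k j * c r j) (DOp.Tpow (k : ℤ))))
        - (∑ r ∈ Finset.Ico 1 m, ∑ k ∈ Finset.range r,
            DOp.mul (DOp.Tpow (-(r : ℤ)))
              (DOp.mul (DOp.singleOp 0 fun j => a k j * c r j) (DOp.Tpow (k : ℤ))))
        + (∑ r ∈ Finset.range m, ∑ k ∈ Finset.Ico (r + 1) m,
            DOp.mul (DOp.Tpow (-(r : ℤ)))
              (DOp.mul (DOp.singleOp 0 fun j => a k j * c r j) (DOp.Tpow (k : ℤ))))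
        - (∑ r ∈ Finset.range m,
            DOp.mul (DOp.Tpow (-(r : ℤ)))
              (DOp.mul (DOp.singleOp 0 (c r)) (DOp.Tpow (m : ℤ)))) :=
  stmt14_general m a c
end
end

section
/- Let m ≥ 2, let γ : ℤ → ℝ^m be a sequence of vectors, and let a⁰, …, a^{m−1} : ℤ → ℝ satisfy γ_{s+m} = Σ_{r=0}^{m−1} a^r_s γ_{s+r} for all s ∈ ℤ (i.e. D(γ) = 0 for D := Σ_{r=0}^{m−1} a^r 𝒯^r − 𝒯^m, acting componentwise). Let c⁰, …, c^{m−1} : ℤ → ℝ be arbitrary sequences and set E := Σ_{r=0}^{m−1} (𝒯^{−r} + 𝒯^{−m} ∘ a^r) ∘ c^r. Then for every s ∈ ℤ: 2·(r(E·D)(γ))_s = q⁰_s γ_s + Σ_{ℓ=1}^{m−1} q^ℓ_s γ_{s+ℓ}, where q^ℓ_s = 2 Σ_{r=1}^{m−ℓ−1} a^{r+ℓ}_{s−r} c^r_{s−r} − 2 c^{m−ℓ}_{s−m+ℓ} for 1 ≤ ℓ ≤ m−1, and q⁰_s = Σ_{k=1}^{m−1} a^k_{s−k} c^k_{s−k}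 − Σ_{k=0}^{m−1} a^k_{s−m} c^k_{s−m} − a⁰_s c⁰_s. -/
noncomputable section

/-- Componentwise action of a difference operator on an `ℝ^m`-valued sequence. -/
def applyVec (m : ℕ) (O : DOp) (γ : ℤ → Fin m → ℝ) : ℤ → Fin m → ℝ :=
  fun s => ∑ᶠ n : ℤ, O n s • γ (s + n)

section lemmas
variable (m : ℕ) (a c : ℕ → ℤ → ℝ)

lemma L1 (X : DOp) (cc : ℤ → ℝ) (n j : ℤ) :
    DOp.mul X (DOp.singleOp 0 cc) n j = X n j * cc (j + n) := by
  unfold DOp.mul DOp.singleOp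
  rw [finsum_eq_single _ n]
  · simp
  · intro x hx
    have : ¬ (n - x = 0) := by omega
    simp [this]

lemma L2 (i j : ℤ) : Eof m a c i j =
    ∑ r ∈ Finset.range m,
      ((if i = -(r:ℤ) then 1 else 0) + (if i = -(m:ℤ) then 1 else 0) * a r (j + i)) * c r (j + i) := by
  unfold Eof
  simp only [Finset.sum_apply]
  refine Finset.sum_congr rfl fun r _ => ?_
  rw [L1]
  simp only [Pi.add_apply, L1, DOp.Tpow, DOp.singleOp]

lemma L3 (n j : ℤ) : Dof m a n j =
    (∑ r ∈ Finset.range m, if n = (r:ℤ) then a r j else 0) - (if n = (m:ℤ) then 1 else 0) := by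
  simp [Dof, DOp.Tpow, DOp.singleOp, Finset.sum_apply]

lemma L3supp (n j : ℤ) (h : Dof m a n j ≠ 0) : 0 ≤ n ∧ n ≤ (m:ℤ) := by
  by_contra hc
  apply h
  rw [L3]
  have h1 : ∀ r ∈ Finset.range m, (if n = (r:ℤ) then a r j else 0) = 0 := by
    intro r hr
    simp only [Finset.mem_range] at hr
    have : ¬ (n = (r:ℤ)) := by omega
    simp [this]
  rw [Finset.sum_eq_zero h1]
  have : ¬ (n = (m:ℤ)) := by omega
  simp [this]

lemma L2supp (i j : ℤ) (h : Eof m a c i j ≠ 0) : -(m:ℤ) ≤ i ∧ i ≤ 0 := by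
  by_contra hc
  apply h
  rw [L2]
  apply Finset.sum_eq_zero
  intro r hr
  simp only [Finset.mem_range] at hr
  have h1 : ¬ (i = -(r:ℤ)) := by omega
  have h2 : ¬ (i = -(m:ℤ)) := by omega
  simp [h1, h2]

lemma L4 (n s : ℤ) : DOp.mul (Eof m a c) (Dof m a) n s =
    ∑ r ∈ Finset.range m,
      (c r (s - (r:ℤ)) * Dof m a (n + (r:ℤ)) (s - (r:ℤ))
       + a r (s - (m:ℤ)) * c r (s - (m:ℤ)) * Dof m a (n + (m:ℤ)) (s - (m:ℤ))) := by
  have hsupp : Function.support (fun i => Eof m a c i s * Dof m a (n - i) (s + i))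
      ⊆ (Finset.Icc (-(m:ℤ)) 0 : Finset ℤ) := by
    intro i hi
    simp only [Function.mem_support] at hi
    have : Eof m a c i s ≠ 0 := fun h => hi (by rw [h]; ring)
    have := L2supp m a c i s this
    simp only [Finset.coe_Icc, Set.mem_Icc]
    omega
  rw [show DOp.mul (Eof m a c) (Dof m a) n s = ∑ᶠ i : ℤ, Eof m a c i s * Dof m a (n - i) (s + i) from rfl,
    finsum_eq_finset_sum_of_support_subset _ hsupp]
  have key : ∀ i ∈ Finset.Icc (-(m:ℤ)) 0, Eof m a c i s * Dof m a (n - i) (s + i)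
      = ∑ r ∈ Finset.range m,
        ((if i = -(r:ℤ) then c r (s + i) * Dof m a (n - i) (s + i) else 0)
         + (if i = -(m:ℤ) then a r (s + i) * c r (s + i) * Dof m a (n - i) (s + i) else 0)) := by
    intro i _
    rw [L2, Finset.sum_mul]
    refine Finset.sum_congr rfl fun r _ => ?_
    split_ifs <;> ring
  rw [Finset.sum_congr rfl key, Finset.sum_comm]
  refine Finset.sum_congr rfl fun r hr => ?_
  simp only [Finset.mem_range] at hr
  rw [Finset.sum_add_distrib, Finset.sum_ite_eq' (Finset.Icc (-(m:ℤ)) 0) (-(r:ℤ)),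
    Finset.sum_ite_eq' (Finset.Icc (-(m:ℤ)) 0) (-(m:ℤ))]
  have h1 : -(r:ℤ) ∈ Finset.Icc (-(m:ℤ)) 0 := by simp; omega
  have h2 : -(m:ℤ) ∈ Finset.Icc (-(m:ℤ)) 0 := by simp
  rw [if_pos h1, if_pos h2]
  have e1 : s + -(r:ℤ) = s - r := by ring
  have e2 : n - -(r:ℤ) = n + r := by ring
  have e3 : s + -(m:ℤ) = s - m := by ring
  have e4 : n - -(m:ℤ) = n + m := by ring
  rw [e1, e2, e3, e4]

end lemmas


section lemmas2
variable (m : ℕ) (a c : ℕ → ℤ → ℝ)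

lemma L4supp (n s : ℤ) (h : DOp.mul (Eof m a c) (Dof m a) n s ≠ 0) :
    n ∈ Finset.Icc (-(m:ℤ)) (m:ℤ) := by
  by_contra hc
  simp only [Finset.mem_Icc, not_and_or, not_le] at hc
  apply h
  rw [L4]
  apply Finset.sum_eq_zero
  intro r hr
  simp only [Finset.mem_range] at hr
  have h1 : Dof m a (n + (r:ℤ)) (s - (r:ℤ)) = 0 := by
    by_contra hd
    have := L3supp m a (n + (r:ℤ)) (s - (r:ℤ)) hd
    omega
  have h2 : Dof m a (n + (m:ℤ)) (s - (m:ℤ)) = 0 := by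
    by_contra hd
    have := L3supp m a (n + (m:ℤ)) (s - (m:ℤ)) hd
    omega
  rw [h1, h2]; ring

lemma L5 (O : DOp) (γ : ℤ → Fin m → ℝ) (s : ℤ)
    (h : ∀ n, O n s ≠ 0 → n ∈ Finset.Icc (-(m:ℤ)) (m:ℤ)) :
    applyVec m O γ s = ∑ n ∈ Finset.Icc (-(m:ℤ)) (m:ℤ), O n s • γ (s + n) := by
  unfold applyVec
  apply finsum_eq_finset_sum_of_support_subset
  intro n hn
  simp only [Function.mem_support] at hn
  have : O n s ≠ 0 := fun h0 => hn (by rw [h0]; simp)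
  exact h n this

lemma pickFin {V : Type*} [AddCommMonoid V] (M : Finset ℤ) (k : ℤ) (f : ℤ → V)
    (hk : k ∈ M) : (∑ n ∈ M, if n = k then f n else 0) = f k := by
  rw [Finset.sum_ite_eq' M k f, if_pos hk]

/-- Master lemma: weighted sum of A-coefficients against γ. -/
lemma L6 (γ : ℤ → Fin m → ℝ) (s : ℤ) (w : ℤ → ℝ) :
    (∑ n ∈ Finset.Icc (-(m:ℤ)) (m:ℤ),
        (w n * DOp.mul (Eof m a c) (Dof m a) n s) • γ (s + n))
    = ∑ r ∈ Finset.range m,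
        ((∑ r' ∈ Finset.range m,
            (w ((r':ℤ) - r) * (c r (s - (r:ℤ)) * a r' (s - (r:ℤ)))) • γ (s + ((r':ℤ) - r)))
         + (∑ r' ∈ Finset.range m,
            (w ((r':ℤ) - m) * (a r (s - (m:ℤ)) * c r (s - (m:ℤ)) * a r' (s - (m:ℤ)))) • γ (s + ((r':ℤ) - m)))
         - (w ((m:ℤ) - r) * c r (s - (r:ℤ))) • γ (s + ((m:ℤ) - r))
         - (w 0 * (a r (s - (m:ℤ)) * c r (s - (m:ℤ)))) • γ s) := by
  have step1 : ∀ n ∈ Finset.Icc (-(m:ℤ)) (m:ℤ),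
      (w n * DOp.mul (Eof m a c) (Dof m a) n s) • γ (s + n)
      = ∑ r ∈ Finset.range m,
          ((w n * (c r (s - (r:ℤ)) * Dof m a (n + (r:ℤ)) (s - (r:ℤ)))) • γ (s + n)
           + (w n * (a r (s - (m:ℤ)) * c r (s - (m:ℤ)) * Dof m a (n + (m:ℤ)) (s - (m:ℤ)))) • γ (s + n)) := by
    intro n _
    rw [L4, Finset.mul_sum, Finset.sum_smul]
    refine Finset.sum_congr rfl fun r _ => ?_
    rw [mul_add, add_smul]
  rw [Finset.sum_congr rfl step1, Finset.sum_comm]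
  refine Finset.sum_congr rfl fun r hr => ?_
  simp only [Finset.mem_range] at hr
  have h1 : (∑ n ∈ Finset.Icc (-(m:ℤ)) (m:ℤ),
        (w n * (c r (s - (r:ℤ)) * Dof m a (n + (r:ℤ)) (s - (r:ℤ)))) • γ (s + n))
      = (∑ r' ∈ Finset.range m,
          (w ((r':ℤ) - r) * (c r (s - (r:ℤ)) * a r' (s - (r:ℤ)))) • γ (s + ((r':ℤ) - r)))
        - (w ((m:ℤ) - r) * c r (s - (r:ℤ))) • γ (s + ((m:ℤ) - r)) := by
    have expand : ∀ n ∈ Finset.Icc (-(m:ℤ)) (m:ℤ),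
        (w n * (c r (s - (r:ℤ)) * Dof m a (n + (r:ℤ)) (s - (r:ℤ)))) • γ (s + n)
        = (∑ r' ∈ Finset.range m,
            if n = (r':ℤ) - r then (w n * (c r (s - (r:ℤ)) * a r' (s - (r:ℤ)))) • γ (s + n) else 0)
          - (if n = (m:ℤ) - r then (w n * c r (s - (r:ℤ))) • γ (s + n) else 0) := by
      intro n _
      rw [L3]
      simp only [mul_sub, Finset.mul_sum, sub_smul, Finset.sum_smul, mul_ite, mul_zero, mul_one,
        ite_smul, zero_smul]
      congr 1
      · exact Finset.sum_congr rfl fun r' _ => if_congr (by omega) rfl rfl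
      · exact if_congr (by omega) rfl rfl
    rw [Finset.sum_congr rfl expand, Finset.sum_sub_distrib]
    congr 1
    · rw [Finset.sum_comm]
      refine Finset.sum_congr rfl fun r' hr' => ?_
      simp only [Finset.mem_range] at hr'
      have hk : (r':ℤ) - r ∈ Finset.Icc (-(m:ℤ)) (m:ℤ) := by simp; omega
      exact pickFin _ _ _ hk
    · have hk : (m:ℤ) - r ∈ Finset.Icc (-(m:ℤ)) (m:ℤ) := by simp; omega
      exact pickFin _ _ _ hk
  have h2 : (∑ n ∈ Finset.Icc (-(m:ℤ)) (m:ℤ),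
        (w n * (a r (s - (m:ℤ)) * c r (s - (m:ℤ)) * Dof m a (n + (m:ℤ)) (s - (m:ℤ)))) • γ (s + n))
      = (∑ r' ∈ Finset.range m,
          (w ((r':ℤ) - m) * (a r (s - (m:ℤ)) * c r (s - (m:ℤ)) * a r' (s - (m:ℤ)))) • γ (s + ((r':ℤ) - m)))
        - (w 0 * (a r (s - (m:ℤ)) * c r (s - (m:ℤ)))) • γ s := by
    have expand : ∀ n ∈ Finset.Icc (-(m:ℤ)) (m:ℤ),
        (w n * (a r (s - (m:ℤ)) * c r (s - (m:ℤ)) * Dof m a (n + (m:ℤ)) (s - (m:ℤ)))) • γ (s + n)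
        = (∑ r' ∈ Finset.range m,
            if n = (r':ℤ) - m then (w n * (a r (s - (m:ℤ)) * c r (s - (m:ℤ)) * a r' (s - (m:ℤ)))) • γ (s + n) else 0)
          - (if n = 0 then (w n * (a r (s - (m:ℤ)) * c r (s - (m:ℤ)))) • γ (s + n) else 0) := by
      intro n _
      rw [L3]
      simp only [mul_sub, Finset.mul_sum, sub_smul, Finset.sum_smul, mul_ite, mul_zero, mul_one,
        ite_smul, zero_smul]
      congr 1
      · exact Finset.sum_congr rfl fun r' _ => if_congr (by omega) rfl rfl
      · exact if_congr (by omega) rfl rfl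
    rw [Finset.sum_congr rfl expand, Finset.sum_sub_distrib]
    congr 1
    · rw [Finset.sum_comm]
      refine Finset.sum_congr rfl fun r' hr' => ?_
      simp only [Finset.mem_range] at hr'
      have hk : (r':ℤ) - m ∈ Finset.Icc (-(m:ℤ)) (m:ℤ) := by simp; omega
      exact pickFin _ _ _ hk
    · have hk : (0:ℤ) ∈ Finset.Icc (-(m:ℤ)) (m:ℤ) := by simp
      rw [pickFin _ _ (fun n => (w n * (a r (s - (m:ℤ)) * c r (s - (m:ℤ)))) • γ (s + n)) hk]
      norm_num
  rw [Finset.sum_add_distrib, h1, h2]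
  abel

end lemmas2

section lemmas3
variable (m : ℕ) (a c : ℕ → ℤ → ℝ)

/-- `(E·D)(γ) = 0`. -/
lemma L7 (γ : ℤ → Fin m → ℝ) (s : ℤ)
    (hγ : ∀ s : ℤ, γ (s + (m : ℤ)) = ∑ r ∈ Finset.range m, a r s • γ (s + (r : ℤ))) :
    (∑ n ∈ Finset.Icc (-(m:ℤ)) (m:ℤ),
        ((1:ℝ) * DOp.mul (Eof m a c) (Dof m a) n s) • γ (s + n)) = 0 := by
  rw [L6]
  apply Finset.sum_eq_zero
  intro r hr
  have p1 : (∑ r' ∈ Finset.range m,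
      ((1:ℝ) * (c r (s - (r:ℤ)) * a r' (s - (r:ℤ)))) • γ (s + ((r':ℤ) - r)))
      = c r (s - (r:ℤ)) • γ ((s - (r:ℤ)) + m) := by
    rw [hγ (s - (r:ℤ)), Finset.smul_sum]
    refine Finset.sum_congr rfl fun r' _ => ?_
    rw [show s + ((r':ℤ) - r) = (s - (r:ℤ)) + r' by ring, smul_smul, one_mul]
  have p2 : (∑ r' ∈ Finset.range m,
      ((1:ℝ) * (a r (s - (m:ℤ)) * c r (s - (m:ℤ)) * a r' (s - (m:ℤ)))) • γ (s + ((r':ℤ) - m)))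
      = (a r (s - (m:ℤ)) * c r (s - (m:ℤ))) • γ ((s - (m:ℤ)) + m) := by
    rw [hγ (s - (m:ℤ)), Finset.smul_sum]
    refine Finset.sum_congr rfl fun r' _ => ?_
    rw [show s + ((r':ℤ) - m) = (s - (m:ℤ)) + r' by ring, smul_smul, one_mul]
  rw [p1, p2, one_mul, one_mul, show s + ((m:ℤ) - r) = (s - (r:ℤ)) + m by ring,
    show s - (m:ℤ) + (m:ℤ) = s by ring]
  abel

def tau : ℤ → ℝ := fun n => if 0 < n then 2 else if n = 0 then 1 else 0

/-- Reduce `2 • applyVec (rmat A)` to the τ-weighted sum. -/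
lemma L8 (γ : ℤ → Fin m → ℝ) (s : ℤ)
    (hγ : ∀ s : ℤ, γ (s + (m : ℤ)) = ∑ r ∈ Finset.range m, a r s • γ (s + (r : ℤ))) :
    (2:ℝ) • applyVec m (DOp.rmat (DOp.mul (Eof m a c) (Dof m a))) γ s
      = ∑ n ∈ Finset.Icc (-(m:ℤ)) (m:ℤ),
          (tau n * DOp.mul (Eof m a c) (Dof m a) n s) • γ (s + n) := by
  have hsupp : ∀ n, DOp.rmat (DOp.mul (Eof m a c) (Dof m a)) n s ≠ 0 →
      n ∈ Finset.Icc (-(m:ℤ)) (m:ℤ) := by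
    intro n hn
    apply L4supp m a c n s
    intro h0
    apply hn
    unfold DOp.rmat
    rw [h0]
    split_ifs <;> norm_num
  rw [L5 m _ γ s hsupp, Finset.smul_sum]
  have : ∀ n ∈ Finset.Icc (-(m:ℤ)) (m:ℤ),
      (tau n * DOp.mul (Eof m a c) (Dof m a) n s) • γ (s + n)
      = (2:ℝ) • (DOp.rmat (DOp.mul (Eof m a c) (Dof m a)) n s • γ (s + n))
        + ((1:ℝ) * DOp.mul (Eof m a c) (Dof m a) n s) • γ (s + n) := by
    intro n _
    rw [smul_smul, ← add_smul]
    congr 1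
    unfold tau DOp.rmat
    rcases lt_trichotomy n 0 with h|h|h
    · have h1 : ¬ (0:ℤ) < n := by omega
      have h2 : ¬ n = 0 := by omega
      simp only [h1, h2, h, if_true, if_false]
      ring
    · subst h
      norm_num
    · have h2 : ¬ n = 0 := by omega
      have h3 : ¬ n < 0 := by omega
      simp only [h, h2, h3, if_true, if_false]
      ring
  rw [Finset.sum_congr rfl this, Finset.sum_add_distrib, L7 m a c γ s hγ, add_zero]

end lemmas3

section final
variable (m : ℕ) (a c : ℕ → ℤ → ℝ)

lemma pick2 (γ : ℤ → Fin m → ℝ) (s : ℤ) (r r' : ℕ) (hr' : r' < m) (x : ℝ) :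
    (tau ((r':ℤ) - r) * x) • γ (s + ((r':ℤ) - r))
    = ∑ ℓ ∈ Finset.range m,
        (if (ℓ:ℤ) = (r':ℤ) - r then tau ((r':ℤ) - r) * x else 0) • γ (s + (ℓ:ℤ)) := by
  rcases le_or_gt r r' with h | h
  · symm
    rw [Finset.sum_eq_single (r' - r)]
    · have hc : ((r' - r : ℕ):ℤ) = (r':ℤ) - r := by omega
      rw [if_pos hc, hc]
    · intro b _ hb
      rw [if_neg (by omega), zero_smul]
    · intro hmem
      exfalso
      apply hmem
      simp only [Finset.mem_range]
      omega
  · have ht : tau ((r':ℤ) - r) = 0 := by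
      unfold tau
      rw [if_neg (by omega), if_neg (by omega)]
    rw [ht, zero_mul, zero_smul]
    symm
    apply Finset.sum_eq_zero
    intro ℓ _
    split_ifs <;> simp

lemma tau_two (k : ℤ) (hk : 0 < k) : tau k = 2 := by
  unfold tau; rw [if_pos hk]

lemma tau_zero' : tau 0 = 1 := by
  unfold tau; norm_num

end final

def Ccoef (m : ℕ) (a c : ℕ → ℤ → ℝ) (s : ℤ) (ℓ : ℕ) : ℝ :=
  ∑ r ∈ Finset.range m, ∑ r' ∈ Finset.range m,
    if (ℓ:ℤ) = (r':ℤ) - r then tau ((r':ℤ) - r) * (c r (s - (r:ℤ)) * a r' (s - (r:ℤ))) else 0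

section scalars
variable (m : ℕ) (a c : ℕ → ℤ → ℝ) (s : ℤ)

lemma Ccoef_pos (ℓ : ℕ) (hℓ1 : 1 ≤ ℓ) (hℓ2 : ℓ ≤ m - 1) (hm : 2 ≤ m) :
    Ccoef m a c s ℓ
      = 2 * (∑ r ∈ Finset.Icc 1 (m - ℓ - 1), a (r + ℓ) (s - (r : ℤ)) * c r (s - (r : ℤ)))
        + 2 * c 0 s * a ℓ s := by
  unfold Ccoef
  have inner : ∀ r ∈ Finset.range m,
      (∑ r' ∈ Finset.range m,
        if (ℓ:ℤ) = (r':ℤ) - r then tau ((r':ℤ) - r) * (c r (s - (r:ℤ)) * a r' (s - (r:ℤ))) else 0)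
      = if r + ℓ ∈ Finset.range m
          then tau (((r + ℓ : ℕ):ℤ) - r) * (c r (s - (r:ℤ)) * a (r + ℓ) (s - (r:ℤ))) else 0 := by
    intro r _
    have hiff : ∀ r' : ℕ, ((ℓ:ℤ) = (r':ℤ) - r) ↔ (r' = r + ℓ) := fun r' => by omega
    rw [Finset.sum_congr rfl (fun r' _ => if_congr (hiff r') rfl rfl),
      Finset.sum_ite_eq' (Finset.range m) (r + ℓ)
        (fun r' => tau ((r':ℤ) - r) * (c r (s - (r:ℤ)) * a r' (s - (r:ℤ))))]
  rw [Finset.sum_congr rfl inner]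
  have hc : ∀ r : ℕ, ((r + ℓ : ℕ):ℤ) - (r:ℤ) = (ℓ:ℤ) := by intro r; push_cast; ring
  have ht : tau (ℓ:ℤ) = 2 := tau_two _ (by exact_mod_cast Nat.pos_of_ne_zero (by omega))
  simp only [hc, ht, Finset.mem_range]
  have hsub : Finset.range (m - ℓ) ⊆ Finset.range m := Finset.range_subset_range.mpr (by omega)
  have hzero : ∀ x ∈ Finset.range m, x ∉ Finset.range (m - ℓ) →
      (if x + ℓ < m then 2 * (c x (s - (x:ℤ)) * a (x + ℓ) (s - (x:ℤ))) else 0) = 0 := by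
    intro x hx hx2
    simp only [Finset.mem_range] at hx hx2
    rw [if_neg (by omega)]
  rw [← Finset.sum_subset hsub hzero]
  have htrue : ∀ x ∈ Finset.range (m - ℓ),
      (if x + ℓ < m then 2 * (c x (s - (x:ℤ)) * a (x + ℓ) (s - (x:ℤ))) else 0)
      = 2 * (c x (s - (x:ℤ)) * a (x + ℓ) (s - (x:ℤ))) := by
    intro x hx
    simp only [Finset.mem_range] at hx
    rw [if_pos (by omega)]
  rw [Finset.sum_congr rfl htrue]
  have hins : Finset.range (m - ℓ) = insert 0 (Finset.Icc 1 (m - ℓ - 1)) := by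
    ext x; simp; omega
  rw [hins, Finset.sum_insert (by simp)]
  have e0 : 2 * (c 0 (s - ((0:ℕ):ℤ)) * a (0 + ℓ) (s - ((0:ℕ):ℤ))) = 2 * c 0 s * a ℓ s := by
    norm_num; ring
  rw [e0]
  have : (∑ r ∈ Finset.Icc 1 (m - ℓ - 1), 2 * (c r (s - (r:ℤ)) * a (r + ℓ) (s - (r:ℤ))))
      = 2 * (∑ r ∈ Finset.Icc 1 (m - ℓ - 1), a (r + ℓ) (s - (r : ℤ)) * c r (s - (r : ℤ))) := by
    rw [Finset.mul_sum]
    exact Finset.sum_congr rfl fun r _ => by ring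
  rw [this]
  ring

lemma Ccoef_zero (hm : 2 ≤ m) :
    Ccoef m a c s 0
      = a 0 s * c 0 s
        + ∑ k ∈ Finset.Icc 1 (m - 1), a k (s - (k : ℤ)) * c k (s - (k : ℤ)) := by
  unfold Ccoef
  have inner : ∀ r ∈ Finset.range m,
      (∑ r' ∈ Finset.range m,
        if ((0:ℕ):ℤ) = (r':ℤ) - r then tau ((r':ℤ) - r) * (c r (s - (r:ℤ)) * a r' (s - (r:ℤ))) else 0)
      = c r (s - (r:ℤ)) * a r (s - (r:ℤ)) := by
    intro r hr
    have hiff : ∀ r' : ℕ, (((0:ℕ):ℤ) = (r':ℤ) - r) ↔ (r' = r) := fun r' => by omega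
    rw [Finset.sum_congr rfl (fun r' _ => if_congr (hiff r') rfl rfl),
      Finset.sum_ite_eq' (Finset.range m) r
        (fun r' => tau ((r':ℤ) - r) * (c r (s - (r:ℤ)) * a r' (s - (r:ℤ)))), if_pos hr,
      sub_self, tau_zero', one_mul]
  rw [Finset.sum_congr rfl inner]
  have hins : Finset.range m = insert 0 (Finset.Icc 1 (m - 1)) := by
    ext x; simp; omega
  rw [hins, Finset.sum_insert (by simp)]
  have e0 : c 0 (s - ((0:ℕ):ℤ)) * a 0 (s - ((0:ℕ):ℤ)) = a 0 s * c 0 s := by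
    norm_num; ring
  rw [e0]
  congr 1
  exact Finset.sum_congr rfl fun r _ => by ring

end scalars


/-- If `D(γ) = 0`, i.e. `γ_{s+m} = Σ_{r<m} a^r_s γ_{s+r}`, then
`2·(r(E·D)(γ))_s = q⁰_s γ_s + Σ_{ℓ=1}^{m−1} q^ℓ_s γ_{s+ℓ}` with the explicit
coefficients `q^ℓ`, `q⁰` below. -/
theorem stmt15 (m : ℕ) (hm : 2 ≤ m) (γ : ℤ → Fin m → ℝ) (a c : ℕ → ℤ → ℝ)
    (hγ : ∀ s : ℤ, γ (s + (m : ℤ)) = ∑ r ∈ Finset.range m, a r s • γ (s + (r : ℤ))) :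
    ∀ s : ℤ,
      (2 : ℝ) • applyVec m (DOp.rmat (DOp.mul (Eof m a c) (Dof m a))) γ s
        = ((∑ k ∈ Finset.Icc 1 (m - 1), a k (s - (k : ℤ)) * c k (s - (k : ℤ)))
            - (∑ k ∈ Finset.range m, a k (s - (m : ℤ)) * c k (s - (m : ℤ)))
            - a 0 s * c 0 s) • γ s
          + ∑ ℓ ∈ Finset.Icc 1 (m - 1),
              (2 * (∑ r ∈ Finset.Icc 1 (m - ℓ - 1),
                      a (r + ℓ) (s - (r : ℤ)) * c r (s - (r : ℤ)))
                - 2 * c (m - ℓ) (s - (m : ℤ) + (ℓ : ℤ))) • γ (s + (ℓ : ℤ)) := by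
  intro s
  rw [L8 m a c γ s hγ, L6 m a c γ s tau]
  have hins : Finset.range m = insert 0 (Finset.Icc 1 (m - 1)) := by
    ext x; simp; omega
  -- simplify each bracket
  have hbr : ∀ r ∈ Finset.range m,
      ((∑ r' ∈ Finset.range m,
          (tau ((r':ℤ) - r) * (c r (s - (r:ℤ)) * a r' (s - (r:ℤ)))) • γ (s + ((r':ℤ) - r)))
       + (∑ r' ∈ Finset.range m,
          (tau ((r':ℤ) - m) * (a r (s - (m:ℤ)) * c r (s - (m:ℤ)) * a r' (s - (m:ℤ)))) • γ (s + ((r':ℤ) - m)))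
       - (tau ((m:ℤ) - r) * c r (s - (r:ℤ))) • γ (s + ((m:ℤ) - r))
       - (tau 0 * (a r (s - (m:ℤ)) * c r (s - (m:ℤ)))) • γ s)
      = (∑ r' ∈ Finset.range m,
          (tau ((r':ℤ) - r) * (c r (s - (r:ℤ)) * a r' (s - (r:ℤ)))) • γ (s + ((r':ℤ) - r)))
        - (2 * c r (s - (r:ℤ))) • γ (s + ((m:ℤ) - r))
        - (a r (s - (m:ℤ)) * c r (s - (m:ℤ))) • γ s := by
    intro r hr
    simp only [Finset.mem_range] at hr
    have h2 : (∑ r' ∈ Finset.range m,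
        (tau ((r':ℤ) - m) * (a r (s - (m:ℤ)) * c r (s - (m:ℤ)) * a r' (s - (m:ℤ)))) • γ (s + ((r':ℤ) - m))) = 0 := by
      apply Finset.sum_eq_zero
      intro r' hr'
      simp only [Finset.mem_range] at hr'
      have : tau ((r':ℤ) - m) = 0 := by
        unfold tau
        rw [if_neg (by omega), if_neg (by omega)]
      rw [this, zero_mul, zero_smul]
    have h3 : tau ((m:ℤ) - r) = 2 := tau_two _ (by omega)
    rw [h2, add_zero, h3, tau_zero', one_mul]
  rw [Finset.sum_congr rfl hbr, Finset.sum_sub_distrib, Finset.sum_sub_distrib]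
  -- Piece 1: reorganize by shift ℓ
  have hP1 : (∑ r ∈ Finset.range m, ∑ r' ∈ Finset.range m,
        (tau ((r':ℤ) - r) * (c r (s - (r:ℤ)) * a r' (s - (r:ℤ)))) • γ (s + ((r':ℤ) - r)))
      = ∑ ℓ ∈ Finset.range m, (Ccoef m a c s ℓ) • γ (s + (ℓ:ℤ)) := by
    have e1 : ∀ r ∈ Finset.range m,
        (∑ r' ∈ Finset.range m,
          (tau ((r':ℤ) - r) * (c r (s - (r:ℤ)) * a r' (s - (r:ℤ)))) • γ (s + ((r':ℤ) - r)))
        = ∑ r' ∈ Finset.range m, ∑ ℓ ∈ Finset.range m,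
            (if (ℓ:ℤ) = (r':ℤ) - r then tau ((r':ℤ) - r) * (c r (s - (r:ℤ)) * a r' (s - (r:ℤ))) else 0) • γ (s + (ℓ:ℤ)) := by
      intro r _
      exact Finset.sum_congr rfl fun r' hr' =>
        pick2 m γ s r r' (Finset.mem_range.mp hr') _
    rw [Finset.sum_congr rfl e1,
      Finset.sum_congr rfl (fun r _ => Finset.sum_comm), Finset.sum_comm]
    refine Finset.sum_congr rfl fun ℓ _ => ?_
    unfold Ccoef
    rw [Finset.sum_smul]
    exact Finset.sum_congr rfl fun r _ => (Finset.sum_smul).symm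
  -- Piece 3
  have hP3 : (∑ r ∈ Finset.range m, (2 * c r (s - (r:ℤ))) • γ (s + ((m:ℤ) - r)))
      = (∑ r' ∈ Finset.range m, (2 * c 0 s * a r' s) • γ (s + (r':ℤ)))
        + ∑ ℓ ∈ Finset.Icc 1 (m - 1), (2 * c (m - ℓ) (s - (m:ℤ) + (ℓ:ℤ))) • γ (s + (ℓ:ℤ)) := by
    conv_lhs => rw [hins, Finset.sum_insert (by simp)]
    congr 1
    · have e0 : (2 * c 0 (s - ((0:ℕ):ℤ))) • γ (s + ((m:ℤ) - ((0:ℕ):ℤ))) = (2 * c 0 s) • γ (s + (m:ℤ)) := by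
        norm_num
      rw [e0, hγ s, Finset.smul_sum]
      exact Finset.sum_congr rfl fun r' _ => by rw [smul_smul]
    · refine Finset.sum_nbij' (fun r => m - r) (fun ℓ => m - ℓ) ?_ ?_ ?_ ?_ ?_
      · intro r hr; simp only [Finset.mem_Icc] at hr ⊢; omega
      · intro ℓ hℓ; simp only [Finset.mem_Icc] at hℓ ⊢; omega
      · intro r hr; simp only [Finset.mem_Icc] at hr; show m - (m - r) = r; omega
      · intro ℓ hℓ; simp only [Finset.mem_Icc] at hℓ; show m - (m - ℓ) = ℓ; omega
      · intro r hr
        simp only [Finset.mem_Icc] at hr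
        have e1 : ((m - r : ℕ):ℤ) = (m:ℤ) - r := by omega
        have e2 : m - (m - r) = r := by omega
        rw [e1, e2, show s - (m:ℤ) + ((m:ℤ) - (r:ℤ)) = s - (r:ℤ) from by ring]
  -- Piece 4
  have hP4 : (∑ r ∈ Finset.range m, (a r (s - (m:ℤ)) * c r (s - (m:ℤ))) • γ s)
      = (∑ k ∈ Finset.range m, a k (s - (m : ℤ)) * c k (s - (m : ℤ))) • γ s :=
    (Finset.sum_smul).symm
  rw [hP1, hP3, hP4]
  -- split off ℓ = 0
  have splitC : (∑ ℓ ∈ Finset.range m, (Ccoef m a c s ℓ) • γ (s + (ℓ:ℤ)))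
      = (Ccoef m a c s 0) • γ s
        + ∑ ℓ ∈ Finset.Icc 1 (m - 1), (Ccoef m a c s ℓ) • γ (s + (ℓ:ℤ)) := by
    rw [hins, Finset.sum_insert (by simp)]
    norm_num
  have splitA : (∑ r' ∈ Finset.range m, (2 * c 0 s * a r' s) • γ (s + (r':ℤ)))
      = (2 * c 0 s * a 0 s) • γ s
        + ∑ ℓ ∈ Finset.Icc 1 (m - 1), (2 * c 0 s * a ℓ s) • γ (s + (ℓ:ℤ)) := by
    rw [hins, Finset.sum_insert (by simp)]
    norm_num
  rw [splitC, splitA]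
  -- rewrite coefficients
  have E1 : (∑ ℓ ∈ Finset.Icc 1 (m - 1), (Ccoef m a c s ℓ) • γ (s + (ℓ:ℤ)))
      = ∑ ℓ ∈ Finset.Icc 1 (m - 1),
          ((2 * (∑ r ∈ Finset.Icc 1 (m - ℓ - 1),
                  a (r + ℓ) (s - (r : ℤ)) * c r (s - (r : ℤ)))
            - 2 * c (m - ℓ) (s - (m : ℤ) + (ℓ : ℤ))) • γ (s + (ℓ : ℤ))
           + ((2 * c 0 s * a ℓ s) • γ (s + (ℓ:ℤ))
              + (2 * c (m - ℓ) (s - (m:ℤ) + (ℓ:ℤ))) • γ (s + (ℓ:ℤ)))) := by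
    refine Finset.sum_congr rfl fun ℓ hℓ => ?_
    simp only [Finset.mem_Icc] at hℓ
    rw [← add_smul, ← add_smul, Ccoef_pos m a c s ℓ hℓ.1 hℓ.2 hm]
    congr 1
    ring
  have E0 : (Ccoef m a c s 0) • γ s
      = ((∑ k ∈ Finset.Icc 1 (m - 1), a k (s - (k : ℤ)) * c k (s - (k : ℤ)))
            - (∑ k ∈ Finset.range m, a k (s - (m : ℤ)) * c k (s - (m : ℤ)))
            - a 0 s * c 0 s) • γ s
        + ((2 * c 0 s * a 0 s) • γ s
           + (∑ k ∈ Finset.range m, a k (s - (m : ℤ)) * c k (s - (m : ℤ))) • γ s) := by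
    rw [← add_smul, ← add_smul, Ccoef_zero m a c s hm]
    congr 1
    ring
  rw [E1, E0, Finset.sum_add_distrib, Finset.sum_add_distrib]
  abel
end
end
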